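/- arXiv:2504.18321 — 8 statements merged into one kernel-verified Lean document; each statement's English description precedes it below -/
import Mathlib

section
/- The Cesàro-type logarithmic mean (1/N)∑_{n=1}^N log(u_n/u_N) converges to 0 as N→∞ for every slowly varying sequence (u_n) of positive reals. -/
open Filter Finset Real MeasureTheory
open scoped ENNReal Nat Topology

/-!
Write `w = logb 2 ∘ u`, so that `w ⌊a n⌋ - w n → 0` for every `a > 0`. A measure-theoretic
(Egorov-type) argument upgrades this to uniformity on ratios: for every `ε > 0` there is `k`
with `|w m - w n| ≤ ε` whenever `k ≤ n ≤ m ≤ 2n`. Chaining through `n, 2n, 4n, …` gives the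
Potter-type bound `|w N - w n| ≤ ε (1 + logb 2 (N / n))` for `k ≤ n ≤ N`, and
`∑_{n ≤ N} log (N / n) = log (N^N / N!) ≤ N`, so the Cesàro mean is eventually `O(ε)`.
-/

theorem sum_log_div_le (N : ℕ) : ∑ n ∈ Icc 1 N, log (N / n) ≤ N := by
  have hprod : ∏ n ∈ Icc 1 N, ((N : ℝ) / n) = (N : ℝ) ^ N / N ! := by
    rw [prod_div_distrib, prod_const, Nat.card_Icc, Nat.add_sub_cancel,
      ← Ico_add_one_right_eq_Icc, ← Nat.cast_prod, prod_Ico_id_eq_factorial]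
  rcases N.eq_zero_or_pos with rfl | hN
  · simp
  rw [← log_prod fun n hn => by
    have : 0 < n := (mem_Icc.1 hn).1
    positivity, hprod, log_le_iff_le_exp (by positivity)]
  exact pow_div_factorial_le_exp _ N.cast_nonneg N

theorem sum_one_add_logb_div_le (N : ℕ) : ∑ n ∈ Icc 1 N, (1 + logb 2 (N / n)) ≤ 3 * N := by
  have hlog2 : 1 / 2 < log 2 := by linarith [log_two_gt_d9]
  have hlogb : ∑ n ∈ Icc 1 N, logb 2 (N / n) ≤ 2 * N := by
    simp only [logb, ← sum_div]
    rw [div_le_iff₀ (by positivity)]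
    nlinarith [sum_log_div_le N, (N.cast_nonneg : (0 : ℝ) ≤ N)]
  rw [sum_add_distrib, sum_const, Nat.card_Icc, Nat.add_sub_cancel, nsmul_one]
  linarith

theorem Nat.floor_mul_eq_iff_mem_Ico {x r : ℝ} (hx : 0 ≤ x) (hr : 0 < r) {K : ℕ} :
    ⌊x * r⌋₊ = K ↔ x ∈ Set.Ico (K / r) ((K + 1) / r) := by
  rw [Nat.floor_eq_iff (by positivity), Set.mem_Ico, div_le_iff₀ hr, lt_div_iff₀ hr]

theorem volume_biUnion_Ico_div (𝒦 : Finset ℕ) {r : ℝ} (hr : 0 < r) :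
    volume (⋃ K ∈ 𝒦, Set.Ico ((K : ℝ) / r) ((K + 1) / r)) = #𝒦 * ENNReal.ofReal (1 / r) := by
  have hdisj :
      (𝒦 : Set ℕ).PairwiseDisjoint fun K : ℕ => Set.Ico ((K : ℝ) / r) ((K + 1) / r) := by
    intro K _ K' _ hne
    refine Set.disjoint_left.2 fun x hx hx' => hne ?_
    have hx0 : 0 ≤ x := le_trans (by positivity) hx.1
    exact ((Nat.floor_mul_eq_iff_mem_Ico hx0 hr).2 hx).symm.trans
      ((Nat.floor_mul_eq_iff_mem_Ico hx0 hr).2 hx')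
  rw [measure_biUnion_finset hdisj fun _ _ => measurableSet_Ico, sum_congr rfl fun K _ => ?_,
    sum_const, nsmul_eq_mul]
  rw [Real.volume_Ico]
  congr 1
  field_simp
  ring

theorem exists_floor_mul_eq_floor_mul {G : Set ℝ} (h₁ : 1 < volume (G ∩ Set.Icc 2 4))
    (h₂ : 6 < volume (G ∩ Set.Icc 2 9)) {n m : ℕ} (hn : 0 < n) (hnm : n ≤ m) (hm : m ≤ 2 * n) :
    ∃ l ∈ G, ∃ μ ∈ G, ⌊l * n⌋₊ = ⌊μ * m⌋₊ := by
  classical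
  -- The cells `[K/m, (K+1)/m)` met by `G ∩ [2, 4]` carry measure `> 1`; the cells `[K/n, (K+1)/n)`
  -- with the same labels are at least as large, lie in `[2, 9]`, and so must meet `G ∩ [2, 9]`.
  have hnR : (0 : ℝ) < n := by exact_mod_cast hn
  have hmR : (0 : ℝ) < m := by exact_mod_cast hn.trans_le hnm
  set 𝒦 : Finset ℕ :=
    (range (4 * m + 1)).filter fun K => ∃ μ ∈ G ∩ Set.Icc 2 4, ⌊μ * m⌋₊ = K
  have hcover : G ∩ Set.Icc 2 4 ⊆ ⋃ K ∈ 𝒦, Set.Ico ((K : ℝ) / m) ((K + 1) / m) := by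
    intro μ hμ
    have hle : ⌊μ * m⌋₊ ≤ 4 * m := Nat.floor_le_of_le (by push_cast; nlinarith [hμ.2.2])
    exact Set.mem_biUnion (mem_filter.2 ⟨mem_range.2 (by omega), μ, hμ, rfl⟩)
      ((Nat.floor_mul_eq_iff_mem_Ico (by linarith [hμ.2.1]) hmR).1 rfl)
  set D := ⋃ K ∈ 𝒦, Set.Ico ((K : ℝ) / n) ((K + 1) / n)
  have hD : 1 < volume D := by
    calc 1 < volume (G ∩ Set.Icc 2 4) := h₁
      _ ≤ #𝒦 * ENNReal.ofReal (1 / m) :=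
        (measure_mono hcover).trans_eq (volume_biUnion_Ico_div 𝒦 hmR)
      _ ≤ #𝒦 * ENNReal.ofReal (1 / n) := by gcongr
      _ = volume D := (volume_biUnion_Ico_div 𝒦 hnR).symm
  have hDsub : D ⊆ Set.Icc 2 9 := by
    refine Set.iUnion₂_subset fun K hK x hx => ?_
    obtain ⟨hK, μ, hμ, rfl⟩ := mem_filter.1 hK
    have h2 : 2 * m ≤ ⌊μ * m⌋₊ := Nat.le_floor (by push_cast; nlinarith [hμ.2.1])
    have h4 : ⌊μ * m⌋₊ ≤ 4 * m := by have := mem_range.1 hK; omega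
    constructor
    · refine le_trans ?_ hx.1
      rw [le_div_iff₀ hnR]
      exact_mod_cast (show 2 * n ≤ ⌊μ * m⌋₊ by omega)
    · refine hx.2.le.trans ?_
      rw [div_le_iff₀ hnR]
      exact_mod_cast (show ⌊μ * m⌋₊ + 1 ≤ 9 * n by omega)
  have hvol : volume (Set.Icc (2 : ℝ) 9) < volume (G ∩ Set.Icc 2 9) + volume D := by
    rw [Real.volume_Icc, show (9 : ℝ) - 2 = 6 + 1 by norm_num,
      ENNReal.ofReal_add (by norm_num) (by norm_num), ENNReal.ofReal_one, ENNReal.ofReal_ofNat]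
    exact ENNReal.add_lt_add h₂ hD
  obtain ⟨l, hlG, hlD⟩ := nonempty_inter_of_measure_lt_add volume
    (Finset.measurableSet_biUnion _ fun _ _ => measurableSet_Ico) Set.inter_subset_right hDsub
    hvol
  obtain ⟨K, hK, hlK⟩ := Set.mem_iUnion₂.1 hlD
  obtain ⟨-, μ, hμ, rfl⟩ := mem_filter.1 hK
  exact ⟨l, hlG.1, μ, hμ.1, (Nat.floor_mul_eq_iff_mem_Ico (by linarith [hlG.2.1]) hnR).2 hlK⟩

theorem abs_sub_le_of_forall_le_two_mul {w : ℕ → ℝ} {ε : ℝ} {k : ℕ} (hε : 0 ≤ ε)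
    (hk : ∀ n m, k ≤ n → n ≤ m → m ≤ 2 * n → |w m - w n| ≤ ε)
    {n N : ℕ} (hkn : k ≤ n) (hn : 0 < n) (hnN : n ≤ N) :
    |w N - w n| ≤ ε * (1 + logb 2 (N / n)) := by
  induction hd : N - n using Nat.strong_induction_on generalizing n with
  | _ d ih =>
    by_cases h2 : N ≤ 2 * n
    · have hlogb : 0 ≤ logb 2 ((N : ℝ) / n) :=
        logb_nonneg one_lt_two ((one_le_div (by positivity)).2 (by exact_mod_cast hnN))
      calc |w N - w n| ≤ ε := hk n N hkn hnN h2
        _ ≤ ε * (1 + logb 2 (N / n)) := le_mul_of_one_le_right hε (by linarith)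
    · have hN : 0 < N := by omega
      have hdouble : logb 2 ((N : ℝ) / ↑(2 * n)) = logb 2 (N / n) - 1 := by
        rw [Nat.cast_mul, Nat.cast_two, mul_comm, ← div_div,
          logb_div (by positivity) two_ne_zero, logb_self_eq_one one_lt_two]
      calc |w N - w n| ≤ |w N - w (2 * n)| + |w (2 * n) - w n| := abs_sub_le _ _ _
        _ ≤ ε * (1 + logb 2 (N / ↑(2 * n))) + ε :=
          add_le_add (ih (N - 2 * n) (by omega) (by omega) (by omega) (by omega) rfl)
            (hk n (2 * n) hkn (by omega) le_rfl)
        _ = ε * (1 + logb 2 (N / n)) := by rw [hdouble]; ring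

theorem abs_sum_sub_le_of_forall_le_two_mul {w : ℕ → ℝ} {ε : ℝ} {k : ℕ} (hε : 0 ≤ ε)
    (hk : ∀ n m, k ≤ n → n ≤ m → m ≤ 2 * n → |w m - w n| ≤ ε) {N : ℕ} (hkN : k ≤ N) :
    |∑ n ∈ Icc 1 N, (w n - w N)| ≤ ∑ n ∈ range k, |w n - w k| + 3 * ε * N := by
  have hterm : ∀ n ∈ Icc 1 N,
      |w n - w N| ≤ (if n < k then |w n - w k| else 0) + ε * (1 + logb 2 (N / n)) := by
    intro n hn
    obtain ⟨hn, hnN⟩ := mem_Icc.1 hn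
    split_ifs with hnk
    · have hNk : logb 2 ((N : ℝ) / k) ≤ logb 2 (N / n) := by
        have hk0 : (0 : ℝ) < k := by exact_mod_cast (show 0 < k by omega)
        have hN : (0 : ℝ) < N := by exact_mod_cast hn.trans hnN
        exact logb_le_logb_of_le one_lt_two (by positivity)
          (div_le_div_of_nonneg_left hN.le (by positivity) (by exact_mod_cast hnk.le))
      calc |w n - w N| ≤ |w n - w k| + |w k - w N| := abs_sub_le _ _ _
        _ ≤ |w n - w k| + ε * (1 + logb 2 (N / n)) := by
          rw [abs_sub_comm (w k)]
          gcongr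
          exact (abs_sub_le_of_forall_le_two_mul hε hk le_rfl (by omega) hkN).trans
            (by gcongr)
    · rw [zero_add, abs_sub_comm]
      exact abs_sub_le_of_forall_le_two_mul hε hk (by omega) hn hnN
  calc |∑ n ∈ Icc 1 N, (w n - w N)| ≤ ∑ n ∈ Icc 1 N, |w n - w N| := abs_sum_le_sum_abs _ _
    _ ≤ ∑ n ∈ Icc 1 N, ((if n < k then |w n - w k| else 0) + ε * (1 + logb 2 (N / n))) :=
      sum_le_sum hterm
    _ = ∑ n ∈ (Icc 1 N).filter (· < k), |w n - w k| +
        ε * ∑ n ∈ Icc 1 N, (1 + logb 2 (N / n)) := by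
      rw [sum_add_distrib, sum_filter, mul_sum]
    _ ≤ ∑ n ∈ range k, |w n - w k| + ε * (3 * N) := by
      gcongr
      · exact fun n hn => mem_range.2 (mem_filter.1 hn).2
      · exact sum_one_add_logb_div_le N
    _ = ∑ n ∈ range k, |w n - w k| + 3 * ε * N := by ring

def AddSlowlyVarying (w : ℕ → ℝ) : Prop :=
  ∀ a : ℝ, 0 < a → Tendsto (fun n : ℕ => w ⌊a * n⌋₊ - w n) atTop (𝓝 0)

namespace AddSlowlyVarying

variable {w : ℕ → ℝ}

theorem eventually_lt_volume_inter (hw : AddSlowlyVarying w) {ε : ℝ} (hε : 0 < ε)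
    {I : Set ℝ} (hI : I ⊆ Set.Ioi 0) {t : ℝ≥0∞} (ht : t < volume I) :
    ∀ᶠ k : ℕ in atTop,
      t < volume ({a : ℝ | ∀ n : ℕ, k ≤ n → |w ⌊a * n⌋₊ - w n| ≤ ε} ∩ I) := by
  have hmono : Monotone fun k => {a : ℝ | ∀ n : ℕ, k ≤ n → |w ⌊a * n⌋₊ - w n| ≤ ε} ∩ I :=
    fun i j hij => Set.inter_subset_inter_left _ fun a ha n hn => ha n (hij.trans hn)
  have hcover : ⋃ k, {a : ℝ | ∀ n : ℕ, k ≤ n → |w ⌊a * n⌋₊ - w n| ≤ ε} ∩ I = I := by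
    refine Set.Subset.antisymm (Set.iUnion_subset fun _ => Set.inter_subset_right) fun a ha => ?_
    obtain ⟨k, hk⟩ := eventually_atTop.1
      ((hw a (hI ha)).eventually (Metric.closedBall_mem_nhds 0 hε))
    exact Set.mem_iUnion.2 ⟨k, fun n hn => by simpa using hk n hn, ha⟩
  have hlim := tendsto_measure_iUnion_atTop (μ := volume) hmono
  rw [hcover] at hlim
  exact hlim.eventually (lt_mem_nhds ht)

theorem exists_forall_abs_sub_le (hw : AddSlowlyVarying w) {ε : ℝ} (hε : 0 < ε) :
    ∃ k, ∀ n m, k ≤ n → n ≤ m → m ≤ 2 * n → |w m - w n| ≤ ε := by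
  have hpos : ∀ b c : ℝ, 0 < b → Set.Icc b c ⊆ Set.Ioi 0 := fun b c hb x hx => hb.trans_le hx.1
  obtain ⟨k, h₁, h₂⟩ := ((hw.eventually_lt_volume_inter (half_pos hε) (hpos 2 4 two_pos)
    (t := 1) (by norm_num)).and
    (hw.eventually_lt_volume_inter (half_pos hε) (hpos 2 9 two_pos) (t := 6) (by norm_num))).exists
  refine ⟨k, fun n m hkn hnm hm => ?_⟩
  rcases n.eq_zero_or_pos with rfl | hn
  · obtain rfl : m = 0 := by omega
    simpa using hε.le
  obtain ⟨l, hl, μ, hμ, hfloor⟩ := exists_floor_mul_eq_floor_mul h₁ h₂ hn hnm hm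
  have hln := hl n hkn
  have hμm := hμ m (hkn.trans hnm)
  rw [hfloor] at hln
  calc |w m - w n| ≤ |w m - w ⌊μ * m⌋₊| + |w ⌊μ * m⌋₊ - w n| := abs_sub_le _ _ _
    _ ≤ ε / 2 + ε / 2 := add_le_add (by rwa [abs_sub_comm]) hln
    _ = ε := add_halves ε

theorem tendsto_cesaro_sub (hw : AddSlowlyVarying w) :
    Tendsto (fun N : ℕ => (1 / (N : ℝ)) * ∑ n ∈ Icc 1 N, (w n - w N)) atTop (𝓝 0) := by
  rw [Metric.tendsto_atTop]
  intro η hη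
  obtain ⟨k, hk⟩ := hw.exists_forall_abs_sub_le (ε := η / 4) (by positivity)
  set C := ∑ n ∈ range k, |w n - w k|
  obtain ⟨N₀, hN₀⟩ := eventually_atTop.1
    ((tendsto_const_div_atTop_nhds_zero_nat C).eventually
      (gt_mem_nhds (by positivity : 0 < η / 4)))
  refine ⟨max (max k 1) N₀, fun N hN => ?_⟩
  have hNR : (0 : ℝ) < N := by
    exact_mod_cast (le_max_right k 1).trans ((le_max_left _ _).trans hN)
  have hsum := abs_sum_sub_le_of_forall_le_two_mul (by positivity) hk
    ((le_max_left k 1).trans ((le_max_left _ _).trans hN))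
  have hC := hN₀ N ((le_max_right _ _).trans hN)
  rw [dist_eq, sub_zero, abs_mul, abs_of_pos (one_div_pos.2 hNR)]
  calc 1 / (N : ℝ) * |∑ n ∈ Icc 1 N, (w n - w N)| ≤ 1 / N * (C + 3 * (η / 4) * N) := by gcongr
    _ = C / N + 3 * (η / 4) := by field_simp
    _ < η := by linarith

end AddSlowlyVarying

theorem stmt3 (u : ℕ → ℝ) (hpos : ∀ n, 0 < u n)
    (hsv : ∀ α : ℝ, 0 < α →
      Tendsto (fun n : ℕ => u ⌊α * n⌋₊ / u n) atTop (nhds 1)) :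
    Tendsto (fun N : ℕ => (1 / (N : ℝ)) * ∑ n ∈ Finset.Icc 1 N, Real.logb 2 (u n / u N))
      atTop (nhds 0) := by
  have hlogb : ∀ n N, logb 2 (u n / u N) = logb 2 (u n) - logb 2 (u N) := fun n N =>
    logb_div (hpos n).ne' (hpos N).ne'
  have hw : AddSlowlyVarying fun n => logb 2 (u n) := fun a ha => by
    have := ((continuousAt_logb (b := 2) one_ne_zero).tendsto.comp (hsv a ha))
    rw [logb_one] at this
    exact this.congr fun n => hlogb _ _
  simpa only [hlogb] using hw.tendsto_cesaro_sub
end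

section
/- If (μ_n) is a regularly varying sequence of positive reals with index -b (b>0), then (1/N)∑_{n=1}^N log(μ_n/μ_N) converges to b/ln(2) as N→∞. -/
/-!
Write `μ n = n ^ (-b) * ℓ n` and `ψ n = log (ℓ n)`, so that
`log (μ n / μ N) = (ψ n - ψ N) + b * (log N - log n)`. By Stirling,
`∑_{n ≤ N} (log N - log n) = N log N - log N! = N + o(N)`, so it remains to show that the
Cesàro means of `ψ n - ψ N` tend to `0`. The uniform convergence theorem for slowly varying
functions, a consequence of Egorov's theorem, gives `|ψ n - ψ N| ≤ ε` for `N / 3 ≤ n ≤ N` and `N`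
large. Splitting `T N = ∑_{n ≤ N} (ψ n - ψ N)` at `N / 2` then yields
`|T N| ≤ |T (N / 2)| + ε N`, hence `|T N| ≤ A + 2 ε N` for a constant `A`.
-/

open Filter Topology MeasureTheory

section UniformConvergence

open Set

lemma exists_mem_Icc_notMem_of_volume_lt {t : Set ℝ} {α : ℝ} (hα : 0 < α) (hα1 : α ≤ 1)
    (ht : volume t < ENNReal.ofReal (α / 2)) : ∃ β ∈ Icc α (2 * α), β ∉ t ∧ β / α ∉ t := by
  by_contra! hcover
  have hsub : Icc α (2 * α) ⊆ t ∪ (· * α⁻¹) ⁻¹' t := fun β hβ => by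
    by_cases hβt : β ∈ t
    · exact Or.inl hβt
    · exact Or.inr (by rw [mem_preimage, ← div_eq_mul_inv]; exact hcover β hβ hβt)
  have hscaled : volume ((· * α⁻¹) ⁻¹' t) ≤ volume t := by
    rw [Real.volume_preimage_mul_right (inv_ne_zero hα.ne'), inv_inv, abs_of_pos hα]
    exact mul_le_of_le_one_left bot_le (ENNReal.ofReal_le_one.2 hα1)
  refine (lt_irrefl (ENNReal.ofReal α)) ?_
  calc ENNReal.ofReal α = volume (Icc α (2 * α)) := by rw [Real.volume_Icc]; ring_nf
    _ ≤ volume t + volume t := (measure_mono hsub).trans ((measure_union_le _ _).trans (by gcongr))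
    _ < ENNReal.ofReal (α / 2) + ENNReal.ofReal (α / 2) := ENNReal.add_lt_add ht ht
    _ = ENNReal.ofReal α := by
      rw [← ENNReal.ofReal_add (by positivity) (by positivity), add_halves]

theorem eventually_abs_sub_le_of_tendsto_sub_comp_mul {φ : ℝ → ℝ} (hφ : Measurable φ)
    (h : ∀ β > 0, Tendsto (fun k : ℕ => φ (β * k) - φ k) atTop (𝓝 0))
    {δ ε : ℝ} (hδ : 0 < δ) (hδ1 : δ ≤ 1) (hε : 0 < ε) :
    ∀ᶠ N : ℕ in atTop, ∀ n : ℕ, δ * N ≤ n → n ≤ N → |φ n - φ N| ≤ ε := by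
  obtain ⟨t, -, -, ht, hunif⟩ := tendstoUniformlyOn_of_ae_tendsto (μ := volume) (s := Icc δ 2)
    (f := fun (k : ℕ) β => φ (β * k) - φ k) (g := 0)
    (fun k => ((hφ.comp (measurable_id.mul_const _)).sub_const _).stronglyMeasurable)
    stronglyMeasurable_const measurableSet_Icc measure_Icc_lt_top.ne
    (ae_of_all _ fun β hβ => h β (hδ.trans_le hβ.1)) (by positivity : 0 < δ / 4)
  obtain ⟨m, hm⟩ :=
    eventually_atTop.1 (Metric.tendstoUniformlyOn_iff.1 hunif (ε / 2) (by positivity))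
  filter_upwards [(tendsto_natCast_atTop_atTop.const_mul_atTop hδ).eventually_ge_atTop (m : ℝ),
    eventually_gt_atTop 0] with N hNm hN0 n hn hnN
  have hmN : m ≤ N := by exact_mod_cast hNm.trans (mul_le_of_le_one_left N.cast_nonneg hδ1)
  have hmn : m ≤ n := by exact_mod_cast hNm.trans hn
  have hN : (0 : ℝ) < N := by exact_mod_cast hN0
  have hn0 : (0 : ℝ) < n := (mul_pos hδ hN).trans_le hn
  have hα : δ ≤ n / N := (le_div_iff₀ hN).2 hn
  have hα1 : (n : ℝ) / N ≤ 1 := (div_le_one hN).2 (by exact_mod_cast hnN)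
  have hαpos : 0 < (n : ℝ) / N := hδ.trans_le hα
  -- With `α = n / N`, both `β` and `β / α` lie outside Egorov's exceptional set `t`, and
  -- `β * N = (β / α) * n`.
  obtain ⟨β, hβ, hβt, hγt⟩ := exists_mem_Icc_notMem_of_volume_lt hαpos hα1
    (ht.trans_lt ((ENNReal.ofReal_lt_ofReal_iff (by positivity)).2 (by linarith)))
  have hβN := hm N hmN β ⟨⟨hα.trans hβ.1, by linarith [hβ.2]⟩, hβt⟩
  have hγn := hm n hmn (β / (n / N)) ⟨⟨hδ1.trans ((one_le_div hαpos).2 hβ.1),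
    (div_le_iff₀ hαpos).2 (by linarith [hβ.2])⟩, hγt⟩
  have hmeet : β / (n / N) * n = β * N := by field_simp
  rw [hmeet] at hγn
  simp only [Pi.zero_apply, dist_zero_left, Real.norm_eq_abs] at hβN hγn
  calc |φ n - φ N| = |(φ (β * N) - φ N) - (φ (β * N) - φ n)| := by ring_nf
    _ ≤ |φ (β * N) - φ N| + |φ (β * N) - φ n| := abs_sub _ _
    _ ≤ ε := by linarith

end UniformConvergence

section Cesaro

open Finset

lemma le_add_two_mul_of_le_half {u : ℕ → ℝ} {c : ℝ} (hc : 0 ≤ c) {N₀ : ℕ} (hN₀ : 1 ≤ N₀)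
    (h : ∀ N ≥ N₀, u N ≤ u (N / 2) + c * N) :
    ∃ A, ∀ N, u N ≤ A + 2 * c * N := by
  refine ⟨∑ k ∈ range N₀, |u k|, fun N => ?_⟩
  induction N using Nat.strong_induction_on with
  | _ N ih =>
    rcases lt_or_ge N N₀ with hN | hN
    · have hsmall : u N ≤ ∑ k ∈ range N₀, |u k| :=
        (le_abs_self _).trans <| single_le_sum (f := fun k => |u k|)
          (fun _ _ => abs_nonneg _) (mem_range.2 hN)
      have hlin : 0 ≤ 2 * c * N := by positivity
      linarith
    · have hhalf : ((N / 2 : ℕ) : ℝ) * 2 ≤ N := by exact_mod_cast Nat.div_mul_le_self N 2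
      nlinarith [h N hN, ih (N / 2) (by omega)]

lemma tendsto_div_natCast_of_le_half {u : ℕ → ℝ} (hu : ∀ N, 0 ≤ u N)
    (h : ∀ ε > 0, ∀ᶠ N in atTop, u N ≤ u (N / 2) + ε * N) :
    Tendsto (fun N => u N / N) atTop (𝓝 0) := by
  rw [Metric.tendsto_atTop]
  intro ε hε
  obtain ⟨N₀, hN₀⟩ := eventually_atTop.1 (h (ε / 3) (by positivity))
  obtain ⟨A, hA⟩ := le_add_two_mul_of_le_half (by positivity : 0 ≤ ε / 3)
    (Nat.le_max_right N₀ 1) fun N hN => hN₀ N (le_of_max_le_left hN)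
  obtain ⟨N₁, hN₁⟩ := exists_nat_gt (3 * |A| / ε)
  refine ⟨N₁ + 1, fun N hN => ?_⟩
  have hNpos : (0 : ℝ) < N := by exact_mod_cast (show 0 < N by omega)
  have hAN : 3 * |A| < ε * N := by
    rw [div_lt_iff₀ hε] at hN₁
    nlinarith [(show (N₁ : ℝ) ≤ N by exact_mod_cast (show N₁ ≤ N by omega))]
  rw [Real.dist_eq, sub_zero, abs_of_nonneg (div_nonneg (hu N) hNpos.le), div_lt_iff₀ hNpos]
  linarith [hA N, le_abs_self A]

lemma sum_Icc_sub_eq (ψ : ℕ → ℝ) {M N : ℕ} (h : M ≤ N) :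
    ∑ n ∈ Icc 1 N, (ψ n - ψ N) =
      ∑ n ∈ Icc 1 M, (ψ n - ψ M) + M * (ψ M - ψ N) + ∑ n ∈ Ioc M N, (ψ n - ψ N) := by
  have hIcc : ∀ K, Icc 1 K = Ioc 0 K := Icc_add_one_left_eq_Ioc 0
  have hhead : ∑ n ∈ Ioc 0 M, (ψ n - ψ N) = ∑ n ∈ Ioc 0 M, (ψ n - ψ M) + M * (ψ M - ψ N) := by
    rw [sum_congr rfl fun n _ => (sub_add_sub_cancel (ψ n) (ψ M) (ψ N)).symm, sum_add_distrib,
      sum_const, Nat.card_Ioc, Nat.sub_zero, nsmul_eq_mul]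
  rw [hIcc, hIcc, ← sum_Ioc_consecutive _ (Nat.zero_le M) h, hhead]

lemma abs_sum_Icc_sub_le {ψ : ℕ → ℝ} {ε : ℝ} {N : ℕ} (hN : 3 ≤ N)
    (h : ∀ n : ℕ, (1 / 3 : ℝ) * N ≤ n → n ≤ N → |ψ n - ψ N| ≤ ε) :
    |∑ n ∈ Icc 1 N, (ψ n - ψ N)| ≤ |∑ n ∈ Icc 1 (N / 2), (ψ n - ψ (N / 2))| + ε * N := by
  set M := N / 2
  have hMN : M ≤ N := Nat.div_le_self N 2
  have hM3 : (1 / 3 : ℝ) * N ≤ M := by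
    have hNM : (N : ℝ) ≤ 2 * M + 1 := by exact_mod_cast (show N ≤ 2 * M + 1 by omega)
    have hN3 : (3 : ℝ) ≤ N := by exact_mod_cast hN
    linarith
  have hhead : |(M : ℝ) * (ψ M - ψ N)| ≤ M * ε := by
    rw [abs_mul, Nat.abs_cast]
    exact mul_le_mul_of_nonneg_left (h M hM3 (by exact_mod_cast hMN)) M.cast_nonneg
  have htail : |∑ n ∈ Ioc M N, (ψ n - ψ N)| ≤ (N - M : ℕ) * ε := by
    refine (abs_sum_le_sum_abs _ _).trans ?_
    rw [← Nat.card_Ioc, ← nsmul_eq_mul]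
    refine sum_le_card_nsmul _ _ _ fun n hn => ?_
    rw [mem_Ioc] at hn
    refine h n (hM3.trans ?_) (by exact_mod_cast hn.2)
    exact_mod_cast hn.1.le
  rw [sum_Icc_sub_eq ψ hMN]
  have hcast : ((N - M : ℕ) : ℝ) = N - M := Nat.cast_sub hMN
  calc _ ≤ |∑ n ∈ Icc 1 M, (ψ n - ψ M)| + |(M : ℝ) * (ψ M - ψ N)|
        + |∑ n ∈ Ioc M N, (ψ n - ψ N)| := abs_add_three _ _ _
    _ ≤ _ := by rw [hcast] at htail; nlinarith

theorem tendsto_cesaro_sub_of_uniform {ψ : ℕ → ℝ}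
    (h : ∀ ε > 0, ∀ᶠ N : ℕ in atTop, ∀ n : ℕ, (1 / 3 : ℝ) * N ≤ n → n ≤ N → |ψ n - ψ N| ≤ ε) :
    Tendsto (fun N : ℕ => (1 / (N : ℝ)) * ∑ n ∈ Icc 1 N, (ψ n - ψ N)) atTop (𝓝 0) := by
  have hdiv := tendsto_div_natCast_of_le_half (u := fun N => |∑ n ∈ Icc 1 N, (ψ n - ψ N)|)
    (fun _ => abs_nonneg _) fun ε hε => by
      filter_upwards [h ε hε, eventually_ge_atTop 3] with N hN hN3
      exact abs_sum_Icc_sub_le hN3 hN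
  rw [tendsto_zero_iff_norm_tendsto_zero]
  refine hdiv.congr fun N => ?_
  rw [Real.norm_eq_abs, abs_mul, one_div, abs_inv, Nat.abs_cast, inv_mul_eq_div]

lemma sum_Icc_log_eq_log_factorial (N : ℕ) :
    ∑ n ∈ Icc 1 N, Real.log n = Real.log N.factorial := by
  rw [← Finset.Ico_add_one_right_eq_Icc, ← prod_Ico_id_eq_factorial, Nat.cast_prod,
    Real.log_prod fun n hn => Nat.cast_ne_zero.2 (by rw [mem_Ico] at hn; omega)]

open Real in
theorem tendsto_cesaro_log_sub :
    Tendsto (fun N : ℕ => (1 / (N : ℝ)) * ∑ n ∈ Icc 1 N, (log N - log n)) atTop (𝓝 1) := by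
  have hstirling : Tendsto (fun N : ℕ => log (Stirling.stirlingSeq N) / N) atTop (𝓝 0) := by
    simpa using ((continuousAt_log (by positivity)).tendsto.comp
      Stirling.tendsto_stirlingSeq_sqrt_pi).div_atTop tendsto_natCast_atTop_atTop
  have hlog : Tendsto (fun N : ℕ => log (2 * N) / (2 * N)) atTop (𝓝 0) := by
    have := (tendsto_pow_log_div_mul_add_atTop 1 0 1 one_ne_zero).comp
      (tendsto_natCast_atTop_atTop.const_mul_atTop (two_pos (α := ℝ)))
    simpa [Function.comp_def] using this
  have hlim := (tendsto_const_nhds (x := (1 : ℝ))).sub (hstirling.add hlog)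
  rw [add_zero, sub_zero] at hlim
  refine hlim.congr' ?_
  filter_upwards [eventually_ge_atTop 1] with N hN
  have hN0 : (N : ℝ) ≠ 0 := by positivity
  rw [sum_sub_distrib, sum_const, Nat.card_Icc, sum_Icc_log_eq_log_factorial,
    Stirling.log_stirlingSeq_formula, log_div hN0 (exp_pos 1).ne', log_exp]
  field_simp
  push_cast
  ring

end Cesaro

section RegularVariation

variable {b : ℝ} {μ : ℕ → ℝ}

/-- The logarithm of the slowly varying factor `ℓ x = μ ⌊x⌋₊ * x ^ b` of `μ`. -/
noncomputable def logSlowPart (b : ℝ) (μ : ℕ → ℝ) (x : ℝ) : ℝ :=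
  Real.log (μ ⌊x⌋₊) + b * Real.log x

lemma measurable_logSlowPart : Measurable (logSlowPart b μ) :=
  ((measurable_from_nat (f := fun k => Real.log (μ k))).comp Nat.measurable_floor).add
    (measurable_const.mul Real.measurable_log)

lemma tendsto_logSlowPart_mul_sub (hpos : ∀ n, 0 < μ n)
    (hrv : ∀ α : ℝ, 0 < α →
      Tendsto (fun n : ℕ => μ ⌊α * n⌋₊ / μ n) atTop (𝓝 (α ^ (-b))))
    {β : ℝ} (hβ : 0 < β) :
    Tendsto (fun k : ℕ => logSlowPart b μ (β * k) - logSlowPart b μ k) atTop (𝓝 0) := by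
  have hlog := ((Real.continuousAt_log (Real.rpow_pos_of_pos hβ _).ne').tendsto.comp
    (hrv β hβ)).add_const (b * Real.log β)
  rw [Real.log_rpow hβ, neg_mul, neg_add_cancel] at hlog
  refine hlog.congr' ?_
  filter_upwards [eventually_gt_atTop 0] with k hk
  have hk0 : (k : ℝ) ≠ 0 := by positivity
  simp only [Function.comp_apply, logSlowPart, Nat.floor_natCast,
    Real.log_div (hpos _).ne' (hpos _).ne', Real.log_mul hβ.ne' hk0]
  ring

lemma logb_div_eq_logSlowPart (hpos : ∀ n, 0 < μ n) (n N : ℕ) :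
    Real.logb 2 (μ n / μ N) =
      (logSlowPart b μ n - logSlowPart b μ N + b * (Real.log N - Real.log n)) / Real.log 2 := by
  simp only [Real.logb, logSlowPart, Nat.floor_natCast, Real.log_div (hpos _).ne' (hpos _).ne']
  ring

end RegularVariation

theorem stmt4_general (b : ℝ) (μ : ℕ → ℝ) (hpos : ∀ n, 0 < μ n)
    (hrv : ∀ α : ℝ, 0 < α →
      Tendsto (fun n : ℕ => μ ⌊α * n⌋₊ / μ n) atTop (nhds (α ^ (-b)))) :
    Tendsto (fun N : ℕ => (1 / (N : ℝ)) * ∑ n ∈ Finset.Icc 1 N, Real.logb 2 (μ n / μ N))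
      atTop (nhds (b / Real.log 2)) := by
  have hslow := tendsto_cesaro_sub_of_uniform (ψ := fun n : ℕ => logSlowPart b μ n)
    fun ε hε => eventually_abs_sub_le_of_tendsto_sub_comp_mul measurable_logSlowPart
      (fun β hβ => tendsto_logSlowPart_mul_sub hpos hrv hβ) (by norm_num) (by norm_num) hε
  have hlim := (hslow.add (tendsto_cesaro_log_sub.const_mul b)).div_const (Real.log 2)
  rw [zero_add, mul_one] at hlim
  refine hlim.congr fun N => ?_
  simp only [logb_div_eq_logSlowPart (b := b) hpos, ← Finset.sum_div, Finset.sum_add_distrib,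
    ← Finset.mul_sum]
  ring

theorem stmt4 (b : ℝ) (hb : 0 < b) (μ : ℕ → ℝ) (hpos : ∀ n, 0 < μ n)
    (hrv : ∀ α : ℝ, 0 < α →
      Tendsto (fun n : ℕ => μ ⌊α * n⌋₊ / μ n) atTop (nhds (α ^ (-b)))) :
    Tendsto (fun N : ℕ => (1 / (N : ℝ)) * ∑ n ∈ Finset.Icc 1 N, Real.logb 2 (μ n / μ N))
      atTop (nhds (b / Real.log 2)) :=
  stmt4_general b μ hpos hrv
end

section
/- Let φ: ℝ₊* → ℝ₊* be non-increasing and regularly varying of index -b with b ≥ 0, and let (a_k), (b_k) be sequences with a_k → ∞ and 0 < liminf b_k ≤ limsup b_k < ∞. Then liminf_{k→∞} φ(a_k b_k)/φ(a_k) = (limsup_{k→∞} b_k)^{-b} and limsup_{k→∞} φ(a_k b_k)/φ(a_k) = (liminf_{k→∞} b_k)^{-b}. -/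
open Filter

theorem stmt6 (b : ℝ) (hb : 0 ≤ b) (φ : ℝ → ℝ)
    (hφpos : ∀ t : ℝ, 0 < t → 0 < φ t)
    (hφmono : ∀ s t : ℝ, 0 < s → s ≤ t → φ t ≤ φ s)
    (hφrv : ∀ α : ℝ, 0 < α →
      Tendsto (fun t : ℝ => φ (α * t) / φ t) atTop (nhds (α ^ (-b))))
    (a c : ℕ → ℝ) (ha : Tendsto a atTop atTop) (hc0 : ∀ k, 0 < c k)
    (hbdd : BddAbove (Set.range c)) (hlb : 0 < Filter.liminf c atTop) :
    Filter.liminf (fun k : ℕ => φ (a k * c k) / φ (a k)) atTop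
        = (Filter.limsup c atTop) ^ (-b) ∧
      Filter.limsup (fun k : ℕ => φ (a k * c k) / φ (a k)) atTop
        = (Filter.liminf c atTop) ^ (-b) := by
  set r : ℕ → ℝ := fun k => φ (a k * c k) / φ (a k) with hr
  set g : ℝ → ℕ → ℝ := fun m k => φ (m * a k) / φ (a k) with hgdef
  set L := Filter.limsup c atTop with hL
  set l := Filter.liminf c atTop with hl
  obtain ⟨M, hM⟩ := hbdd
  have hcM : ∀ k, c k ≤ M := fun k => hM ⟨k, rfl⟩
  have hble : IsBoundedUnder (· ≤ ·) atTop c :=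
    isBoundedUnder_of ⟨M, hcM⟩
  have hbge : IsBoundedUnder (· ≥ ·) atTop c :=
    isBoundedUnder_of ⟨0, fun k => (hc0 k).le⟩
  have hlL : l ≤ L := liminf_le_limsup hble hbge
  have hL0 : 0 < L := lt_of_lt_of_le hlb hlL
  have ha0 : ∀ᶠ k in atTop, 0 < a k := ha.eventually_gt_atTop 0
  have hg : ∀ m : ℝ, 0 < m → Tendsto (g m) atTop (nhds (m ^ (-b))) :=
    fun m hm => (hφrv m hm).comp ha
  -- comparison lemmas
  have key_le : ∀ m : ℝ, 0 < m → ∀ k, 0 < a k → m ≤ c k → r k ≤ g m k := by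
    intro m hm k hak hmc
    have h1 : m * a k ≤ a k * c k := by
      rw [mul_comm]; exact mul_le_mul_of_nonneg_left hmc hak.le
    have h2 : φ (a k * c k) ≤ φ (m * a k) :=
      hφmono _ _ (mul_pos hm hak) h1
    exact (div_le_div_iff_of_pos_right (hφpos _ hak)).2 h2
  have key_ge : ∀ m : ℝ, 0 < m → ∀ k, 0 < a k → c k ≤ m → g m k ≤ r k := by
    intro m hm k hak hcm
    have h1 : a k * c k ≤ m * a k := by
      rw [mul_comm m]; exact mul_le_mul_of_nonneg_left hcm hak.le
    have h2 : φ (m * a k) ≤ φ (a k * c k) :=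
      hφmono _ _ (mul_pos hak (hc0 k)) h1
    exact (div_le_div_iff_of_pos_right (hφpos _ hak)).2 h2
  -- r is bounded below by 0 eventually
  have hr_ge : IsBoundedUnder (· ≥ ·) atTop r := by
    refine ⟨0, eventually_map.2 ?_⟩
    filter_upwards [ha0] with k hak
    exact div_nonneg (hφpos _ (mul_pos hak (hc0 k))).le (hφpos _ hak).le
  -- r is bounded above, comparing with g (l/2)
  have hl2 : (0:ℝ) < l / 2 := by linarith
  have hev2 : ∀ᶠ k in atTop, l / 2 < c k :=
    eventually_lt_of_lt_liminf (by linarith) hbge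
  have hr_le : IsBoundedUnder (· ≤ ·) atTop r := by
    refine ((hg _ hl2).isBoundedUnder_le).mono_le ?_
    filter_upwards [ha0, hev2] with k hak hck
    exact key_le _ hl2 k hak hck.le
  have hr_cole : IsCoboundedUnder (· ≤ ·) atTop r := hr_ge.isCoboundedUnder_le
  have hr_coge : IsCoboundedUnder (· ≥ ·) atTop r := hr_le.isCoboundedUnder_ge
  -- continuity of x ↦ x ^ (-b)
  have hcont : ∀ x : ℝ, 0 < x → ContinuousAt (fun y : ℝ => y ^ (-b)) x :=
    fun x hx => Real.continuousAt_rpow_const x (-b) (Or.inl hx.ne')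
  constructor
  · -- liminf r = L ^ (-b)
    refine le_antisymm ?_ ?_
    · -- liminf r ≤ L ^ (-b)
      have main : ∀ m : ℝ, 0 < m → m < L → liminf r atTop ≤ m ^ (-b) := by
        intro m hm hmL
        by_contra h
        push_neg at h
        obtain ⟨x, hx1, hx2⟩ := exists_between h
        have hfr : ∃ᶠ k in atTop, m < c k :=
          frequently_lt_of_lt_limsup (hbge.isCoboundedUnder_le) hmL
        have hev1 : ∀ᶠ k in atTop, g m k < x :=
          (hg m hm).eventually (eventually_lt_nhds hx1)
        have hev3 : ∀ᶠ k in atTop, x < r k :=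
          eventually_lt_of_lt_liminf hx2 hr_ge
        obtain ⟨k, hk1, hk2, hk3, hk4⟩ :=
          (hfr.and_eventually (hev1.and (hev3.and ha0))).exists
        exact absurd (key_le m hm k hk4 hk1.le) (by linarith)
      have htend : Tendsto (fun m : ℝ => m ^ (-b)) (nhdsWithin L (Set.Iio L))
          (nhds (L ^ (-b))) := (hcont L hL0).continuousWithinAt
      refine ge_of_tendsto htend ?_
      filter_upwards [eventually_of_mem
        (Ioo_mem_nhdsLT_of_mem (Set.mem_Ioc.2 ⟨hL0, le_refl L⟩)) (fun m hm => hm)]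
        with m hm
      exact main m hm.1 hm.2
    · -- L ^ (-b) ≤ liminf r
      have main : ∀ m : ℝ, L < m → m ^ (-b) ≤ liminf r atTop := by
        intro m hLm
        have hm : 0 < m := lt_trans hL0 hLm
        have hev : ∀ᶠ k in atTop, c k < m := eventually_lt_of_limsup_lt hLm hble
        have hcmp : ∀ᶠ k in atTop, g m k ≤ r k := by
          filter_upwards [ha0, hev] with k hak hck
          exact key_ge m hm k hak hck.le
        calc m ^ (-b) = liminf (g m) atTop := ((hg m hm).liminf_eq).symm
          _ ≤ liminf r atTop :=
            liminf_le_liminf hcmp ((hg m hm).isBoundedUnder_ge) hr_coge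
      have htend : Tendsto (fun m : ℝ => m ^ (-b)) (nhdsWithin L (Set.Ioi L))
          (nhds (L ^ (-b))) := (hcont L hL0).continuousWithinAt
      refine le_of_tendsto htend ?_
      filter_upwards [eventually_mem_nhdsWithin] with m hm
      exact main m hm
  · -- limsup r = l ^ (-b)
    refine le_antisymm ?_ ?_
    · -- limsup r ≤ l ^ (-b)
      have main : ∀ m : ℝ, 0 < m → m < l → limsup r atTop ≤ m ^ (-b) := by
        intro m hm hml
        have hev : ∀ᶠ k in atTop, m < c k := eventually_lt_of_lt_liminf hml hbge
        have hcmp : r ≤ᶠ[atTop] g m := by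
          filter_upwards [ha0, hev] with k hak hck
          exact key_le m hm k hak hck.le
        calc limsup r atTop ≤ limsup (g m) atTop :=
              limsup_le_limsup hcmp hr_cole ((hg m hm).isBoundedUnder_le)
          _ = m ^ (-b) := (hg m hm).limsup_eq
      have htend : Tendsto (fun m : ℝ => m ^ (-b)) (nhdsWithin l (Set.Iio l))
          (nhds (l ^ (-b))) := (hcont l hlb).continuousWithinAt
      refine ge_of_tendsto htend ?_
      filter_upwards [eventually_of_mem
        (Ioo_mem_nhdsLT_of_mem (Set.mem_Ioc.2 ⟨hlb, le_refl l⟩)) (fun m hm => hm)]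
        with m hm
      exact main m hm.1 hm.2
    · -- l ^ (-b) ≤ limsup r
      have main : ∀ m : ℝ, l < m → m ^ (-b) ≤ limsup r atTop := by
        intro m hlm
        have hm : 0 < m := lt_trans hlb hlm
        by_contra h
        push_neg at h
        obtain ⟨x, hx1, hx2⟩ := exists_between h
        have hfr : ∃ᶠ k in atTop, c k < m :=
          frequently_lt_of_liminf_lt (hble.isCoboundedUnder_ge) hlm
        have hev1 : ∀ᶠ k in atTop, x < g m k :=
          (hg m hm).eventually (eventually_gt_nhds hx2)
        have hev3 : ∀ᶠ k in atTop, r k < x :=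
          eventually_lt_of_limsup_lt hx1 hr_le
        obtain ⟨k, hk1, hk2, hk3, hk4⟩ :=
          (hfr.and_eventually (hev1.and (hev3.and ha0))).exists
        exact absurd (key_ge m hm k hk4 hk1.le) (by linarith)
      have htend : Tendsto (fun m : ℝ => m ^ (-b)) (nhdsWithin l (Set.Ioi l))
          (nhds (l ^ (-b))) := (hcont l hlb).continuousWithinAt
      refine le_of_tendsto htend ?_
      filter_upwards [eventually_mem_nhdsWithin] with m hm
      exact main m hm
end

section
/- Let α₁ < α₂ be positive reals, c₁ > 0, c₂ ∈ ℝ, and let g: ℝ₊* → ℝ₊* satisfy g(u) = c₁ u^{-α₁} + c₂ u^{-α₂} + o(u^{-α₂}) as u→∞. Then u = c₁^{1/α₁} g(u)^{-1/α₁} + (c₂ c₁^{(1-α₂)/α₁}/α₁) g(u)^{-(α₁-α₂+1)/α₁} + o(g(u)^{-(α₁-α₂+1)/α₁}) as u→∞. -/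
/-!
Write `g u = c₁ u^(-α₁) ρ u`. The hypothesis says exactly that
`ρ = 1 + (c₂/c₁) u^(α₁-α₂) + o(u^(α₁-α₂))`, so `ρ → 1`. Since `c₁^(1/α₁) g^(-1/α₁) = u ρ^(-1/α₁)`,
the first-order Taylor expansion of `y ↦ y^(-1/α₁)` at `1` gives
`u - c₁^(1/α₁) g^(-1/α₁) = (c₂/(α₁ c₁)) u^(α₁-α₂+1) + o(u^(α₁-α₂+1))`.
Finally `g^(-γ) ~ c₁^(-γ) u^(α₁-α₂+1)` for `γ = (α₁-α₂+1)/α₁`, because `ρ^(-γ) → 1`; this turns the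
main term into the second term of the claim and the error into `o(g^(-γ))`.
-/

open Filter Asymptotics Topology

theorem isLittleO_rpow_sub_one_sub_mul_sub_one (p : ℝ) :
    (fun y : ℝ => y ^ p - 1 - p * (y - 1)) =o[𝓝 1] fun y => y - 1 := by
  simpa [mul_comm] using (Real.hasDerivAt_rpow_const (p := p) (Or.inl one_ne_zero)).isLittleO

theorem rpow_neg_mul_rpow_eq {x u c : ℝ} (hx : 0 ≤ x) (hu : 0 < u) (hc : 0 < c) (a q : ℝ) :
    c ^ (-q) * x ^ q = u ^ (-(a * q)) * (x * u ^ a / c) ^ q := by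
  rw [Real.div_rpow (by positivity) hc.le, Real.mul_rpow hx (by positivity), ← Real.rpow_mul hu.le,
    Real.rpow_neg hc.le, Real.rpow_neg hu.le]
  field_simp

section Expansion

variable {α : Type*} {l : Filter α} {ρ w : α → ℝ} {a : ℝ}

theorem isBigO_sub_one_of_isLittleO (hρ : (fun x => ρ x - 1 - a * w x) =o[l] w) :
    (fun x => ρ x - 1) =O[l] w :=
  (hρ.isBigO.add (isBigO_const_mul_self a w l)).congr_left fun x => by ring

theorem tendsto_nhds_one_of_isLittleO (hw : Tendsto w l (𝓝 0))
    (hρ : (fun x => ρ x - 1 - a * w x) =o[l] w) : Tendsto ρ l (𝓝 1) := by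
  simpa using ((isBigO_sub_one_of_isLittleO hρ).trans_tendsto hw).add_const 1

theorem rpow_sub_one_sub_mul_isLittleO (p : ℝ) (hw : Tendsto w l (𝓝 0))
    (hρ : (fun x => ρ x - 1 - a * w x) =o[l] w) :
    (fun x => ρ x ^ p - 1 - p * a * w x) =o[l] w := by
  have htaylor : (fun x => ρ x ^ p - 1 - p * (ρ x - 1)) =o[l] w :=
    ((isLittleO_rpow_sub_one_sub_mul_sub_one p).comp_tendsto
      (tendsto_nhds_one_of_isLittleO hw hρ)).trans_isBigO (isBigO_sub_one_of_isLittleO hρ)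
  exact (htaylor.add (hρ.const_mul_left p)).congr_left fun x => by ring

end Expansion

theorem ratio_sub_one_sub_isLittleO {α₁ α₂ c₁ c₂ : ℝ} (hc₁ : c₁ ≠ 0) {g : ℝ → ℝ}
    (hgas : (fun u : ℝ => g u - (c₁ * u ^ (-α₁) + c₂ * u ^ (-α₂)))
      =o[atTop] fun u : ℝ => u ^ (-α₂)) :
    (fun u : ℝ => g u * u ^ α₁ / c₁ - 1 - c₂ / c₁ * u ^ (α₁ - α₂))
      =o[atTop] fun u : ℝ => u ^ (α₁ - α₂) := by
  have hshift : ∀ u : ℝ, 0 < u → u ^ (-α₂) * u ^ α₁ = u ^ (α₁ - α₂) := fun u hu => by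
    rw [← Real.rpow_add hu]; ring_nf
  have hscale : (fun u : ℝ => u ^ (-α₂) * (u ^ α₁ / c₁)) =O[atTop] fun u => u ^ (α₁ - α₂) := by
    refine (isBigO_const_mul_self c₁⁻¹ _ atTop).congr' ?_ EventuallyEq.rfl
    filter_upwards [eventually_gt_atTop 0] with u hu
    rw [← hshift u hu]; ring
  refine ((hgas.mul_isBigO (isBigO_refl _ atTop)).trans_isBigO hscale).congr' ?_
    EventuallyEq.rfl
  filter_upwards [eventually_gt_atTop 0] with u hu
  have hcancel : u ^ (-α₁) * u ^ α₁ = 1 := by rw [← Real.rpow_add hu]; simp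
  rw [← hshift u hu]
  field_simp
  linear_combination -c₁ * hcancel

theorem isEquivalent_rpow_of_tendsto_ratio {a c : ℝ} (hc : 0 < c) {g : ℝ → ℝ}
    (hg : ∀ u : ℝ, 0 < u → 0 < g u) (hratio : Tendsto (fun u => g u * u ^ a / c) atTop (𝓝 1))
    (q : ℝ) : (fun u => c ^ (-q) * g u ^ q) ~[atTop] fun u => u ^ (-(a * q)) := by
  refine isEquivalent_iff_exists_eq_mul.mpr ⟨fun u => (g u * u ^ a / c) ^ q, ?_, ?_⟩
  · simpa using hratio.rpow_const (Or.inl one_ne_zero) (p := q)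
  · filter_upwards [eventually_gt_atTop 0] with u hu
    exact (rpow_neg_mul_rpow_eq (hg u hu).le hu hc a q).trans (mul_comm _ _)

theorem sub_rpow_neg_inv_sub_isLittleO {a b c : ℝ} (ha : a ≠ 0) (hc : 0 < c) {g w : ℝ → ℝ}
    (hg : ∀ u : ℝ, 0 < u → 0 < g u) (hw : Tendsto w atTop (𝓝 0))
    (hρ : (fun u => g u * u ^ a / c - 1 - b * w u) =o[atTop] w) :
    (fun u => u - c ^ (1 / a) * g u ^ (-(1 / a)) - b / a * (w u * u))
      =o[atTop] fun u => w u * u := by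
  refine ((rpow_sub_one_sub_mul_isLittleO (-(1 / a)) hw hρ).mul_isBigO
    (isBigO_refl (fun u : ℝ => u) atTop)).neg_left.congr' ?_ EventuallyEq.rfl
  filter_upwards [eventually_gt_atTop 0] with u hu
  have hfactor := rpow_neg_mul_rpow_eq (hg u hu).le hu hc a (-(1 / a))
  rw [neg_neg, show -(a * -(1 / a)) = 1 by field_simp, Real.rpow_one] at hfactor
  rw [hfactor]
  field_simp
  ring

theorem stmt7 (α₁ α₂ c₁ c₂ : ℝ) (h1 : 0 < α₁) (h12 : α₁ < α₂) (hc1 : 0 < c₁)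
    (g : ℝ → ℝ) (hg : ∀ u : ℝ, 0 < u → 0 < g u)
    (hgas : (fun u : ℝ => g u - (c₁ * u ^ (-α₁) + c₂ * u ^ (-α₂)))
      =o[atTop] fun u : ℝ => u ^ (-α₂)) :
    (fun u : ℝ => u -
        (c₁ ^ (1 / α₁) * g u ^ (-(1 / α₁)) +
          (c₂ * c₁ ^ ((1 - α₂) / α₁) / α₁) * g u ^ (-((α₁ - α₂ + 1) / α₁))))
      =o[atTop] fun u : ℝ => g u ^ (-((α₁ - α₂ + 1) / α₁)) := by
  set e := α₁ - α₂ + 1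
  set γ := e / α₁
  have hw : Tendsto (fun u : ℝ => u ^ (α₁ - α₂)) atTop (𝓝 0) := by
    simpa using tendsto_rpow_neg_atTop (sub_pos.mpr h12)
  have hρ := ratio_sub_one_sub_isLittleO hc1.ne' hgas
  have hequiv : (fun u => c₁ ^ γ * g u ^ (-γ)) ~[atTop] fun u => u ^ e := by
    simpa [γ, mul_div_cancel₀ e h1.ne'] using
      isEquivalent_rpow_of_tendsto_ratio hc1 hg (tendsto_nhds_one_of_isLittleO hw hρ) (-γ)
  have hshift : ∀ᶠ u : ℝ in atTop, u ^ (α₁ - α₂) * u = u ^ e :=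
    (eventually_gt_atTop 0).mono fun u hu => (Real.rpow_add_one hu.ne' _).symm
  have hfirst : (fun u => u - c₁ ^ (1 / α₁) * g u ^ (-(1 / α₁)) - c₂ / (α₁ * c₁) * u ^ e)
      =o[atTop] fun u => u ^ e := by
    refine (sub_rpow_neg_inv_sub_isLittleO h1.ne' hc1 hg hw hρ).congr' ?_ hshift
    filter_upwards [hshift] with u hu
    rw [hu, div_div, mul_comm c₁]
  have hsecond : (fun u => c₂ * c₁ ^ ((1 - α₂) / α₁) / α₁ * g u ^ (-γ) - c₂ / (α₁ * c₁) * u ^ e)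
      =o[atTop] fun u => u ^ e := by
    refine (hequiv.isLittleO.const_mul_left (c₂ / (α₁ * c₁))).congr_left fun u => ?_
    rw [show (1 - α₂) / α₁ = γ - 1 by simp only [γ, e]; field_simp; ring, Real.rpow_sub_one hc1.ne']
    simp only [Pi.sub_apply]
    field_simp
  have hscale : (fun u => u ^ e) =O[atTop] fun u => g u ^ (-γ) :=
    hequiv.isBigO_symm.trans (isBigO_const_mul_self _ _ _)
  exact ((hfirst.sub hsecond).congr_left fun u => by ring).trans_isBigO hscale
end

section
/- Let α₁, α₂ > 0 with α₁ < α₂ and 𝔞 := α₁ - α₂ + 1 > 0, c₁ > 0, c₂ ∈ ℝ, and let (μ_n) be positive with μ_n = c₁ n^{-α₁} + c₂ n^{-α₂} + o(n^{-α₂}). Then ∑_{n=1}^d log(μ_n/μ_d) = (α₁/ln 2) d + ((1/𝔞) - 1)(c₂/(c₁ ln 2)) d^𝔞 + o(d^𝔞) as d→∞. -/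
/-!
Write `log μ_n = log c₁ - α₁ log n + (c₂ / c₁) n^γ + r_n` with `γ = α₁ - α₂ ∈ (-1, 0)`; the
remainder is `r_n = o(n^γ)` because `log (1 + t) = t + o(t)`. The quantity
`∑_{n ≤ d} (f n - f d)` is linear in `f` and vanishes on constants. Comparing sums with
integrals, it equals `-d + O(log d)` for `f = log` and `(1 / (γ + 1) - 1) d^(γ+1) + O(1)` for
`f n = n^γ`, while for `f = r` it is `o(d^(γ+1))`. Dividing by `ln 2` gives the claim.
-/

open Filter Asymptotics Topology Finset

theorem MonotoneOn.sum_Icc_sub_integral_mem_Icc {f : ℝ → ℝ} {d : ℕ} (hd : 1 ≤ d)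
    (hf : MonotoneOn f (Set.Icc 1 d)) :
    ∑ n ∈ Icc 1 d, f n - ∫ x in (1 : ℝ)..d, f x ∈ Set.Icc (f 1) (f d) := by
  rw [← Nat.cast_one (R := ℝ)] at hf ⊢
  have hlo := hf.integral_le_sum_Ico hd
  have hhi := hf.sum_le_integral_Ico hd
  have htop : ∑ n ∈ Icc 1 d, f n = ∑ n ∈ Ico 1 d, f n + f d := by
    rw [← Ico_add_one_right_eq_Icc, sum_Ico_succ_top hd]
  have hbot : ∑ n ∈ Icc 1 d, f n = f (1 : ℕ) + ∑ n ∈ Ico 1 d, f (n + 1 : ℕ) := by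
    rw [← Ico_add_one_right_eq_Icc, sum_eq_sum_Ico_succ_bot (by omega),
      sum_Ico_add' (fun n : ℕ => f n) 1 d 1]
  constructor <;> linarith

theorem AntitoneOn.sum_Icc_sub_integral_mem_Icc {f : ℝ → ℝ} {d : ℕ} (hd : 1 ≤ d)
    (hf : AntitoneOn f (Set.Icc 1 d)) :
    ∑ n ∈ Icc 1 d, f n - ∫ x in (1 : ℝ)..d, f x ∈ Set.Icc (f d) (f 1) := by
  have h := hf.neg.sum_Icc_sub_integral_mem_Icc hd
  simp only [sum_neg_distrib, intervalIntegral.integral_neg, Set.mem_Icc] at h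
  constructor <;> linarith [h.1, h.2]

lemma isBigO_sum_Icc_log :
    (fun d : ℕ => ∑ n ∈ Icc 1 d, Real.log n - d * Real.log d + d) =O[atTop]
      fun d : ℕ => 1 + Real.log d := by
  refine IsBigO.of_bound 1 ?_
  filter_upwards [eventually_ge_atTop 1] with d hd
  have hmono : MonotoneOn Real.log (Set.Icc 1 d) :=
    Real.strictMonoOn_log.monotoneOn.mono fun x hx => lt_of_lt_of_le one_pos hx.1
  have h := hmono.sum_Icc_sub_integral_mem_Icc hd
  simp only [integral_log, Real.log_one, mul_zero, sub_zero, Set.mem_Icc] at h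
  have hlog : 0 ≤ Real.log d := Real.log_nonneg (by exact_mod_cast hd)
  rw [one_mul, Real.norm_eq_abs, Real.norm_of_nonneg (by linarith), abs_le]
  constructor <;> linarith

lemma isBigO_sum_Icc_rpow {γ : ℝ} (hγ1 : -1 < γ) (hγ0 : γ ≤ 0) :
    (fun d : ℕ => ∑ n ∈ Icc 1 d, (n : ℝ) ^ γ - (d : ℝ) ^ (γ + 1) / (γ + 1)) =O[atTop]
      fun _ => (1 : ℝ) := by
  refine IsBigO.of_bound (1 + 1 / (γ + 1)) ?_
  filter_upwards [eventually_ge_atTop 1] with d hd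
  have hanti : AntitoneOn (fun x : ℝ => x ^ γ) (Set.Icc 1 d) := fun x hx y _ hxy =>
    Real.rpow_le_rpow_of_nonpos (lt_of_lt_of_le one_pos hx.1) hxy hγ0
  have h := hanti.sum_Icc_sub_integral_mem_Icc hd
  rw [integral_rpow (Or.inl hγ1), Real.one_rpow, Real.one_rpow] at h
  have hpos : 0 ≤ (d : ℝ) ^ γ := by positivity
  have hinv : 0 < 1 / (γ + 1) := one_div_pos.mpr (by linarith)
  rw [norm_one, mul_one, Real.norm_eq_abs, abs_le]
  rw [sub_div, Set.mem_Icc] at h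
  constructor <;> linarith

lemma Finset.sum_Icc_one_eq_sum_range {M : Type*} [AddCommMonoid M] (f : ℕ → M) (d : ℕ) :
    ∑ n ∈ Icc 1 d, f n = ∑ n ∈ range d, f (n + 1) := by
  rw [← Ico_add_one_right_eq_Icc, sum_Ico_eq_sum_range, add_tsub_cancel_right]
  simp only [add_comm]

theorem Asymptotics.IsLittleO.sum_Icc_one {α : Type*} [NormedAddCommGroup α] {f : ℕ → α}
    {g : ℕ → ℝ} (h : f =o[atTop] g) (hg : 0 ≤ g)
    (h'g : Tendsto (fun d => ∑ n ∈ Icc 1 d, g n) atTop atTop) :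
    (fun d => ∑ n ∈ Icc 1 d, f n) =o[atTop] fun d => ∑ n ∈ Icc 1 d, g n := by
  simp only [sum_Icc_one_eq_sum_range] at h'g ⊢
  exact (h.comp_tendsto (tendsto_add_atTop_nat 1)).sum_range (fun n => hg (n + 1)) h'g

lemma tendsto_natCast_rpow_div_atTop {a c : ℝ} (ha : 0 < a) (hc : 0 < c) :
    Tendsto (fun d : ℕ => (d : ℝ) ^ a / c) atTop atTop :=
  ((tendsto_rpow_atTop ha).comp tendsto_natCast_atTop_atTop).atTop_div_const hc

lemma isLittleO_one_natCast_rpow {a : ℝ} (ha : 0 < a) :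
    (fun _ : ℕ => (1 : ℝ)) =o[atTop] fun d : ℕ => (d : ℝ) ^ a :=
  (isLittleO_one_left_iff ℝ).2
    (tendsto_norm_atTop_atTop.comp ((tendsto_rpow_atTop ha).comp tendsto_natCast_atTop_atTop))

lemma isEquivalent_sum_Icc_rpow {γ : ℝ} (hγ1 : -1 < γ) (hγ0 : γ ≤ 0) :
    (fun d : ℕ => ∑ n ∈ Icc 1 d, (n : ℝ) ^ γ) ~[atTop]
      fun d : ℕ => (d : ℝ) ^ (γ + 1) / (γ + 1) := by
  have hγ : 0 < γ + 1 := by linarith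
  refine IsLittleO.isEquivalent ?_
  refine (isBigO_sum_Icc_rpow hγ1 hγ0).trans_isLittleO ?_
  exact (isLittleO_one_left_iff ℝ).2
    (tendsto_norm_atTop_atTop.comp (tendsto_natCast_rpow_div_atTop hγ hγ))

lemma isLittleO_sum_Icc_of_isLittleO_rpow {γ : ℝ} (hγ1 : -1 < γ) (hγ0 : γ ≤ 0) {e : ℕ → ℝ}
    (he : e =o[atTop] fun n : ℕ => (n : ℝ) ^ γ) :
    (fun d => ∑ n ∈ Icc 1 d, e n) =o[atTop] fun d : ℕ => (d : ℝ) ^ (γ + 1) := by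
  have hγ : 0 < γ + 1 := by linarith
  have hsum := isEquivalent_sum_Icc_rpow hγ1 hγ0
  have hdiv : (fun d : ℕ => (d : ℝ) ^ (γ + 1) / (γ + 1)) =O[atTop]
      fun d : ℕ => (d : ℝ) ^ (γ + 1) :=
    ((isBigO_refl _ _).const_mul_left (γ + 1)⁻¹).congr_left fun d => inv_mul_eq_div _ _
  refine (he.sum_Icc_one (fun n => by positivity) ?_).trans_isBigO (hsum.isBigO.trans hdiv)
  exact hsum.symm.tendsto_atTop (tendsto_natCast_rpow_div_atTop hγ hγ)

theorem Real.isLittleO_log_sub_of_isLittleO {α : Type*} {l : Filter α} {s v g : α → ℝ}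
    (hv : v =O[l] g) (hg : Tendsto g l (𝓝 0))
    (hs : (fun x => s x - 1 - v x) =o[l] g) :
    (fun x => Real.log (s x) - v x) =o[l] g := by
  have ht : (fun x => s x - 1) =O[l] g :=
    (hs.isBigO.add hv).congr_left fun x => sub_add_cancel _ _
  have hs1 : Tendsto s l (𝓝 1) := tendsto_sub_nhds_zero_iff.mp (ht.trans_tendsto hg)
  have hlog : (fun y => Real.log y - (y - 1)) =o[𝓝 1] fun y => y - 1 := by
    simpa using hasDerivAt_iff_isLittleO.mp (Real.hasDerivAt_log one_ne_zero)
  refine ((hlog.comp_tendsto hs1).trans_isBigO ht).add hs |>.congr_left fun x => ?_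
  simp only [Function.comp_apply]
  ring

lemma isLittleO_log_sub_of_isLittleO_rpow {α₁ α₂ c₁ c₂ : ℝ} (h12 : α₁ < α₂) (hc1 : 0 < c₁)
    {μ : ℕ → ℝ} (hpos : ∀ n, 0 < μ n)
    (hμ : (fun n : ℕ => μ n - (c₁ * (n : ℝ) ^ (-α₁) + c₂ * (n : ℝ) ^ (-α₂)))
      =o[atTop] fun n : ℕ => (n : ℝ) ^ (-α₂)) :
    (fun n : ℕ => Real.log (μ n) -
        (Real.log c₁ - α₁ * Real.log n + c₂ / c₁ * (n : ℝ) ^ (α₁ - α₂)))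
      =o[atTop] fun n : ℕ => (n : ℝ) ^ (α₁ - α₂) := by
  have hg : Tendsto (fun n : ℕ => (n : ℝ) ^ (α₁ - α₂)) atTop (𝓝 0) := by
    simpa only [neg_sub, Function.comp_def] using
      (tendsto_rpow_neg_atTop (sub_pos.2 h12)).comp tendsto_natCast_atTop_atTop
  have hs : (fun n : ℕ => c₁⁻¹ * μ n * (n : ℝ) ^ α₁ - 1 - c₂ / c₁ * (n : ℝ) ^ (α₁ - α₂))
      =o[atTop] fun n : ℕ => (n : ℝ) ^ (α₁ - α₂) := by
    refine ((hμ.mul_isBigO (isBigO_refl (fun n : ℕ => (n : ℝ) ^ α₁) _)).const_mul_left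
      c₁⁻¹).congr' ?_ ?_
    · filter_upwards [eventually_ge_atTop 1] with n hn
      have hx : (0 : ℝ) < n := by exact_mod_cast hn
      have e1 : (n : ℝ) ^ (-α₁) * (n : ℝ) ^ α₁ = 1 := by
        rw [← Real.rpow_add hx, neg_add_cancel, Real.rpow_zero]
      have e2 : (n : ℝ) ^ (-α₂) * (n : ℝ) ^ α₁ = (n : ℝ) ^ (α₁ - α₂) := by
        rw [← Real.rpow_add hx, neg_add_eq_sub]
      field_simp
      linear_combination (-c₁) * e1 - c₂ * e2
    · filter_upwards [eventually_ge_atTop 1] with n hn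
      rw [← Real.rpow_add (by exact_mod_cast hn), neg_add_eq_sub]
  refine (Real.isLittleO_log_sub_of_isLittleO ((isBigO_refl _ _).const_mul_left (c₂ / c₁)) hg
    hs).congr' ?_ EventuallyEq.rfl
  filter_upwards [eventually_ge_atTop 1] with n hn
  have hx : (0 : ℝ) < n := by exact_mod_cast hn
  have hμn := hpos n
  rw [Real.log_mul (by positivity) (by positivity), Real.log_mul (by positivity) hμn.ne',
    Real.log_inv, Real.log_rpow hx]
  ring

def sumSubLast (f : ℕ → ℝ) (d : ℕ) : ℝ :=
  ∑ n ∈ Icc 1 d, (f n - f d)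

lemma sumSubLast_eq (f : ℕ → ℝ) (d : ℕ) :
    sumSubLast f d = ∑ n ∈ Icc 1 d, f n - d * f d := by
  simp [sumSubLast, sum_sub_distrib]

lemma sumSubLast_const_add_mul_add_mul_add (A b c : ℝ) (f g h : ℕ → ℝ) (d : ℕ) :
    sumSubLast (fun n => A + b * f n + c * g n + h n) d =
      b * sumSubLast f d + c * sumSubLast g d + sumSubLast h d := by
  simp only [sumSubLast, mul_sum, ← sum_add_distrib]
  exact sum_congr rfl fun n _ => by ring

lemma sum_logb_div_eq_sumSubLast {b : ℝ} {μ : ℕ → ℝ} (hpos : ∀ n, 0 < μ n) (d : ℕ) :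
    ∑ n ∈ Icc 1 d, Real.logb b (μ n / μ d) =
      sumSubLast (fun n => Real.log (μ n)) d / Real.log b := by
  simp only [sumSubLast, Real.logb, Real.log_div (hpos _).ne' (hpos d).ne', sum_div]

lemma isLittleO_sumSubLast_log_add {a : ℝ} (ha : 0 < a) :
    (fun d : ℕ => sumSubLast (fun n => Real.log n) d + d) =o[atTop]
      fun d : ℕ => (d : ℝ) ^ a := by
  have hlog : (fun d : ℕ => Real.log d) =o[atTop] fun d : ℕ => (d : ℝ) ^ a :=
    (isLittleO_log_rpow_atTop ha).comp_tendsto tendsto_natCast_atTop_atTop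
  refine (isBigO_sum_Icc_log.trans_isLittleO ((isLittleO_one_natCast_rpow ha).add hlog)).congr_left
    fun d => ?_
  rw [sumSubLast_eq]

lemma isLittleO_sumSubLast_rpow_sub {γ : ℝ} (hγ1 : -1 < γ) (hγ0 : γ ≤ 0) :
    (fun d : ℕ => sumSubLast (fun n => (n : ℝ) ^ γ) d - (1 / (γ + 1) - 1) * (d : ℝ) ^ (γ + 1))
      =o[atTop] fun d : ℕ => (d : ℝ) ^ (γ + 1) := by
  refine ((isBigO_sum_Icc_rpow hγ1 hγ0).trans_isLittleO
    (isLittleO_one_natCast_rpow (by linarith))).congr' ?_ EventuallyEq.rfl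
  filter_upwards [eventually_ge_atTop 1] with d hd
  rw [sumSubLast_eq, Real.rpow_add_one (by positivity)]
  field_simp
  ring

lemma isLittleO_sumSubLast {γ : ℝ} (hγ1 : -1 < γ) (hγ0 : γ ≤ 0) {r : ℕ → ℝ}
    (hr : r =o[atTop] fun n : ℕ => (n : ℝ) ^ γ) :
    sumSubLast r =o[atTop] fun d : ℕ => (d : ℝ) ^ (γ + 1) := by
  have hlast : (fun d : ℕ => (d : ℝ) * r d) =o[atTop] fun d : ℕ => (d : ℝ) ^ (γ + 1) := by
    refine ((isBigO_refl (fun d : ℕ => (d : ℝ)) _).mul_isLittleO hr).congr' EventuallyEq.rfl ?_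
    filter_upwards [eventually_ge_atTop 1] with d hd
    rw [Real.rpow_add_one (by positivity), mul_comm]
  refine ((isLittleO_sum_Icc_of_isLittleO_rpow hγ1 hγ0 hr).sub hlast).congr_left fun d => ?_
  rw [sumSubLast_eq]

theorem stmt8_general (α₁ α₂ c₁ c₂ : ℝ) (h12 : α₁ < α₂)
    (hfa : 0 < α₁ - α₂ + 1) (hc1 : 0 < c₁)
    (μ : ℕ → ℝ) (hpos : ∀ n, 0 < μ n)
    (hμ : (fun n : ℕ => μ n - (c₁ * (n : ℝ) ^ (-α₁) + c₂ * (n : ℝ) ^ (-α₂)))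
      =o[atTop] fun n : ℕ => (n : ℝ) ^ (-α₂)) :
    (fun d : ℕ =>
        (∑ n ∈ Finset.Icc 1 d, Real.logb 2 (μ n / μ d)) -
          ((α₁ / Real.log 2) * d +
            (1 / (α₁ - α₂ + 1) - 1) * (c₂ / (c₁ * Real.log 2)) * (d : ℝ) ^ (α₁ - α₂ + 1)))
      =o[atTop] fun d : ℕ => (d : ℝ) ^ (α₁ - α₂ + 1) := by
  have hr := isLittleO_log_sub_of_isLittleO_rpow h12 hc1 hpos hμ
  set γ := α₁ - α₂
  set r := fun n : ℕ => Real.log (μ n) -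
    (Real.log c₁ - α₁ * Real.log n + c₂ / c₁ * (n : ℝ) ^ γ)
  have hγ0 : γ ≤ 0 := by linarith
  have hγ1 : -1 < γ := by linarith
  have hlogμ : (fun n : ℕ => Real.log (μ n)) =
      fun n : ℕ => Real.log c₁ + -α₁ * Real.log n + c₂ / c₁ * (n : ℝ) ^ γ + r n := by
    funext n
    ring
  have key := ((((isLittleO_sumSubLast_log_add hfa).const_mul_left (-α₁)).add
    ((isLittleO_sumSubLast_rpow_sub hγ1 hγ0).const_mul_left (c₂ / c₁))).add
    (isLittleO_sumSubLast hγ1 hγ0 hr)).const_mul_left (Real.log 2)⁻¹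
  refine key.congr_left fun d => ?_
  rw [sum_logb_div_eq_sumSubLast hpos, hlogμ, sumSubLast_const_add_mul_add_mul_add]
  field_simp
  ring

theorem stmt8 (α₁ α₂ c₁ c₂ : ℝ) (h1 : 0 < α₁) (h2 : 0 < α₂) (h12 : α₁ < α₂)
    (hfa : 0 < α₁ - α₂ + 1) (hc1 : 0 < c₁)
    (μ : ℕ → ℝ) (hpos : ∀ n, 0 < μ n)
    (hμ : (fun n : ℕ => μ n - (c₁ * (n : ℝ) ^ (-α₁) + c₂ * (n : ℝ) ^ (-α₂)))
      =o[atTop] fun n : ℕ => (n : ℝ) ^ (-α₂)) :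
    (fun d : ℕ =>
        (∑ n ∈ Finset.Icc 1 d, Real.logb 2 (μ n / μ d)) -
          ((α₁ / Real.log 2) * d +
            (1 / (α₁ - α₂ + 1) - 1) * (c₂ / (c₁ * Real.log 2)) * (d : ℝ) ^ (α₁ - α₂ + 1)))
      =o[atTop] fun d : ℕ => (d : ℝ) ^ (α₁ - α₂ + 1) :=
  stmt8_general α₁ α₂ c₁ c₂ h12 hfa hc1 μ hpos hμ
end

section
/- For every ε > 0, the ε-covering number of the infinite-dimensional hyperrectangle E_∞ = {x ∈ ℓ^∞ : |x_n| ≤ μ_n for all n} with respect to the sup-norm equals ∏_{n=1}^∞ ⌈μ_n/ε⌉; consequently the metric entropy satisfies H(ε; E_∞, ‖·‖_∞) = ∑_{n=1}^∞ log⌈μ_n/ε⌉. -/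
/-! The hyperrectangle is the product of the intervals `[-μ n, μ n]` and the sup-norm is the
product metric, so both bounds can be proved one coordinate at a time. In one coordinate,
`[-a, a]` is covered by `m = ⌈a / ε⌉` intervals of radius `a / m ≤ ε`, while `m` equally
spaced points of `[-a, a]` are more than `2ε` apart, so no ball of radius `ε` contains two of
them. Since `μ n → 0`, from some index `N` on we have `μ n ≤ ε` and `m = 1`: the tail
coordinates cost nothing, and taking products over the first `N` coordinates of the
centres, resp. of the separated points, gives matching upper and lower bounds. -/

open Filter Metric ENNReal

/-- The `ε`-covering number (with centers allowed anywhere in the ambient space),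
as an extended natural number. -/
noncomputable def coveringNumber {X : Type*} [PseudoMetricSpace X] (ε : ℝ) (K : Set X) : ℕ∞ :=
  sInf {n : ℕ∞ | ∃ S : Finset X, (S.card : ℕ∞) = n ∧ K ⊆ ⋃ x ∈ S, Metric.closedBall x ε}

/-- Metric entropy: binary logarithm of the covering number. -/
noncomputable def metricEntropy {X : Type*} [PseudoMetricSpace X] (ε : ℝ) (K : Set X) : ℝ :=
  Real.logb 2 ((coveringNumber ε K).toNat : ℝ)

section CoveringNumber

variable {X : Type*} [PseudoMetricSpace X] {ι : Type*} [Fintype ι] {ε : ℝ} {K : Set X}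

lemma coveringNumber_le_card (c : ι → X) (hK : K ⊆ ⋃ i, closedBall (c i) ε) :
    coveringNumber ε K ≤ Fintype.card ι := by
  classical
  unfold _root_.coveringNumber
  have hcover : K ⊆ ⋃ x ∈ Finset.univ.image c, closedBall x ε := by
    simpa [Finset.set_biUnion_finset_image] using hK
  refine (sInf_le (Set.mem_ofPred.mpr ⟨_, rfl, hcover⟩)).trans ?_
  exact_mod_cast Finset.card_image_le.trans_eq Finset.card_univ

lemma card_le_coveringNumber (p : ι → X) (hpK : ∀ i, p i ∈ K)
    (hp : Pairwise fun i j => 2 * ε < dist (p i) (p j)) :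
    (Fintype.card ι : ℕ∞) ≤ coveringNumber ε K := by
  refine le_sInf ?_
  rintro _ ⟨S, rfl, hS⟩
  have hcover : ∀ i, ∃ x ∈ S, p i ∈ closedBall x ε := fun i => by simpa using hS (hpK i)
  choose f hfS hf using hcover
  have hinj : Function.Injective fun i => (⟨f i, hfS i⟩ : S) := by
    intro i j hij
    by_contra hne
    have hfij : f i = f j := congrArg Subtype.val hij
    have : dist (p i) (p j) ≤ 2 * ε := calc
      dist (p i) (p j) ≤ dist (p i) (f i) + dist (f j) (p j) := hfij ▸ dist_triangle _ _ _
      _ ≤ ε + ε := add_le_add (hf i) (dist_comm (f j) (p j) ▸ hf j)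
      _ = 2 * ε := by ring
    linarith [hp hne]
  exact_mod_cast (Fintype.card_le_of_injective _ hinj).trans_eq (Fintype.card_coe S)

end CoveringNumber

lemma card_pi_fin {ι : Type*} [Fintype ι] [DecidableEq ι] (f : ι → ℕ) :
    Fintype.card (∀ i, Fin (f i)) = ∏ i, f i := by
  simp

section Grid

variable {a : ℝ} {m k l : ℕ}

lemma exists_nat_lt_le_le_add_one {t : ℝ} (hm : 0 < m) (ht₀ : 0 ≤ t) (htm : t ≤ m) :
    ∃ k < m, (k : ℝ) ≤ t ∧ t ≤ k + 1 := by
  have hceil : ⌈t⌉₊ ≤ m := Nat.ceil_le.mpr htm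
  refine ⟨⌈t⌉₊ - 1, by omega, ?_, ?_⟩
  · rcases Nat.eq_zero_or_pos ⌈t⌉₊ with h | h
    · simpa [h] using ht₀
    · rw [Nat.cast_pred h]
      linarith [Nat.ceil_lt_add_one ht₀]
  · calc t ≤ ⌈t⌉₊ := Nat.le_ceil t
      _ ≤ ((⌈t⌉₊ - 1 : ℕ) : ℝ) + 1 := by exact_mod_cast le_tsub_add

/-- The centre of the `k`-th of `m` equal subintervals of `[-a, a]`. -/
noncomputable def gridCenter (a : ℝ) (m k : ℕ) : ℝ := -a + (2 * k + 1) * (a / m)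

lemma exists_abs_sub_gridCenter_le {y : ℝ} (ha : 0 < a) (hm : 0 < m) (hy : |y| ≤ a) :
    ∃ k < m, |y - gridCenter a m k| ≤ a / m := by
  obtain ⟨hya, hay⟩ := abs_le.mp hy
  have hm' : (0 : ℝ) < m := Nat.cast_pos.mpr hm
  set t := (y + a) * m / (2 * a) with ht
  have ht₀ : 0 ≤ t := div_nonneg (mul_nonneg (by linarith) hm'.le) (by linarith)
  have htm : t ≤ m := by rw [ht, div_le_iff₀ (by linarith)]; nlinarith
  obtain ⟨k, hkm, hkt, htk⟩ := exists_nat_lt_le_le_add_one hm ht₀ htm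
  refine ⟨k, hkm, ?_⟩
  have hdiff : y - gridCenter a m k = a / m * (2 * (t - k) - 1) := by
    rw [gridCenter, ht]; field_simp; ring
  rw [hdiff, abs_mul, abs_of_pos (by positivity)]
  exact mul_le_of_le_one_right (by positivity) (abs_le.mpr ⟨by linarith, by linarith⟩)

/-- The `k`-th of `m` equally spaced points from `-a` to `a`; for `m = 1` the junk value
`x / 0 = 0` makes the single point `-a`. -/
noncomputable def gridPoint (a : ℝ) (m k : ℕ) : ℝ := -a + 2 * a * (k / (m - 1 : ℝ))

lemma abs_gridPoint_le (ha : 0 ≤ a) (hk : k < m) : |gridPoint a m k| ≤ a := by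
  have hkm : (k : ℝ) ≤ m - 1 := by
    have : (k : ℝ) + 1 ≤ m := by exact_mod_cast hk
    linarith
  have h₀ : 0 ≤ (k : ℝ) / (m - 1) := div_nonneg k.cast_nonneg (k.cast_nonneg.trans hkm)
  have h₁ : (k : ℝ) / (m - 1) ≤ 1 := div_le_one_of_le₀ hkm (k.cast_nonneg.trans hkm)
  rw [gridPoint, abs_le]
  constructor <;> nlinarith

lemma div_sub_one_le_abs_sub_gridPoint (ha : 0 ≤ a) (hk : k < m) (hl : l < m)
    (hkl : k ≠ l) :
    2 * a / (m - 1) ≤ |gridPoint a m k - gridPoint a m l| := by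
  have hm : (1 : ℝ) < m := by exact_mod_cast (by omega : 1 < m)
  have hdiff : gridPoint a m k - gridPoint a m l = 2 * a / (m - 1) * ((k : ℝ) - l) := by
    rw [gridPoint, gridPoint]; ring
  have hkl' : (1 : ℝ) ≤ |(k : ℝ) - l| := by
    have := Int.one_le_abs (sub_ne_zero.mpr (Int.natCast_inj.not.mpr hkl))
    exact_mod_cast this
  rw [hdiff, abs_mul, abs_of_nonneg (div_nonneg (by positivity) (by linarith))]
  exact le_mul_of_one_le_right (div_nonneg (by positivity) (by linarith)) hkl'

lemma div_natCeil_div_le (a : ℝ) {ε : ℝ} (hε : 0 < ε) : a / ⌈a / ε⌉₊ ≤ ε := by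
  rcases Nat.eq_zero_or_pos ⌈a / ε⌉₊ with h | h
  · simp [h, hε.le]
  · rw [div_le_iff₀ (Nat.cast_pos.mpr h), mul_comm]
    exact (div_le_iff₀ hε).mp (Nat.le_ceil _)

lemma lt_div_natCeil_div_sub_one {a ε : ℝ} (hε : 0 < ε) (h : 1 < ⌈a / ε⌉₊) :
    ε < a / (⌈a / ε⌉₊ - 1) := by
  have hpos : 0 < a / ε := Nat.ceil_pos.mp (by omega)
  have hm : (1 : ℝ) < ⌈a / ε⌉₊ := by exact_mod_cast h
  rw [lt_div_iff₀ (by linarith), ← lt_div_iff₀' hε]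
  linarith [Nat.ceil_lt_add_one hpos.le]

end Grid

section ExtendByZero

variable {E : Type*} [NormedAddCommGroup E] {N : ℕ}

noncomputable def extendByZero (v : Fin N → E) : lp (fun _ : ℕ => E) ∞ :=
  ⟨fun n => if h : n < N then v ⟨n, h⟩ else 0,
    Memℓp.of_exponent_ge
      (memℓp_zero ((Set.finite_lt_nat N).subset fun _ hn => by_contra fun h => hn (dif_neg h)))
      le_top⟩

lemma extendByZero_apply_of_lt (v : Fin N → E) {n : ℕ} (h : n < N) :
    extendByZero v n = v ⟨n, h⟩ :=
  dif_pos h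

lemma extendByZero_apply_of_le (v : Fin N → E) {n : ℕ} (h : N ≤ n) : extendByZero v n = 0 :=
  dif_neg h.not_gt

end ExtendByZero

section Hyperrectangle

def hyperrectangle (μ : ℕ → ℝ) : Set (lp (fun _ : ℕ => ℝ) ∞) := {x | ∀ n, |x n| ≤ μ n}

variable {μ : ℕ → ℝ} {ε : ℝ}

lemma coveringNumber_hyperrectangle_le (hμ : ∀ n, 0 < μ n) (hε : 0 < ε) {N : ℕ}
    (hN : ∀ n, N ≤ n → μ n ≤ ε) :
    coveringNumber ε (hyperrectangle μ) ≤ ((∏ j : Fin N, ⌈μ j / ε⌉₊ : ℕ) : ℕ∞) := by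
  rw [← card_pi_fin]
  refine coveringNumber_le_card
    (fun σ => extendByZero fun j => gridCenter (μ j) ⌈μ j / ε⌉₊ (σ j)) fun x hx => ?_
  have hm (j : Fin N) : 0 < ⌈μ j / ε⌉₊ := Nat.ceil_pos.mpr (div_pos (hμ j) hε)
  choose k hk hkx using fun j : Fin N => exists_abs_sub_gridCenter_le (hμ j) (hm j) (hx j)
  refine Set.mem_iUnion.mpr ⟨fun j => ⟨k j, hk j⟩, ?_⟩
  rw [mem_closedBall, dist_eq_norm]
  refine lp.norm_le_of_forall_le hε.le fun n => ?_
  rw [lp.coeFn_sub, Pi.sub_apply, Real.norm_eq_abs]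
  rcases lt_or_ge n N with h | h
  · rw [extendByZero_apply_of_lt _ h]
    exact (hkx ⟨n, h⟩).trans (div_natCeil_div_le _ hε)
  · rw [extendByZero_apply_of_le _ h, sub_zero]
    exact (hx n).trans (hN n h)

lemma prod_natCeil_le_coveringNumber_hyperrectangle (hμ : ∀ n, 0 ≤ μ n) (hε : 0 < ε) (N : ℕ) :
    ((∏ j : Fin N, ⌈μ j / ε⌉₊ : ℕ) : ℕ∞) ≤ coveringNumber ε (hyperrectangle μ) := by
  rw [← card_pi_fin]
  set p : (∀ j : Fin N, Fin ⌈μ j / ε⌉₊) → lp (fun _ : ℕ => ℝ) ∞ :=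
    fun σ => extendByZero fun j => gridPoint (μ j) ⌈μ j / ε⌉₊ (σ j)
  refine card_le_coveringNumber p (fun σ n => ?_) fun σ τ hστ => ?_
  · rcases lt_or_ge n N with h | h
    · rw [extendByZero_apply_of_lt _ h]
      exact abs_gridPoint_le (hμ n) (σ _).isLt
    · rw [extendByZero_apply_of_le _ h, abs_zero]
      exact hμ n
  obtain ⟨j, hj⟩ := Function.ne_iff.mp hστ
  have hjne : (σ j : ℕ) ≠ τ j := Fin.val_ne_of_ne hj
  have hm : 1 < ⌈μ j / ε⌉₊ := by omega
  have hpj : |p σ j - p τ j| ≤ dist (p σ) (p τ) := by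
    simpa [dist_eq_norm] using lp.norm_apply_le_norm top_ne_zero (p σ - p τ) j
  calc 2 * ε < 2 * μ j / (⌈μ j / ε⌉₊ - 1) := by
        rw [mul_div_assoc]; linarith [lt_div_natCeil_div_sub_one hε hm]
    _ ≤ |gridPoint (μ j) ⌈μ j / ε⌉₊ (σ j) - gridPoint (μ j) ⌈μ j / ε⌉₊ (τ j)| :=
        div_sub_one_le_abs_sub_gridPoint (hμ j) (σ j).isLt (τ j).isLt hjne
    _ ≤ dist (p σ) (p τ) := by
        simpa only [p, extendByZero_apply_of_lt _ j.isLt] using hpj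

lemma coveringNumber_hyperrectangle (hμ : ∀ n, 0 < μ n) (hε : 0 < ε) {N : ℕ}
    (hN : ∀ n, N ≤ n → μ n ≤ ε) :
    coveringNumber ε (hyperrectangle μ) = ((∏ n ∈ Finset.range N, ⌈μ n / ε⌉₊ : ℕ) : ℕ∞) := by
  rw [← Fin.prod_univ_eq_prod_range (fun n => ⌈μ n / ε⌉₊)]
  exact le_antisymm (coveringNumber_hyperrectangle_le hμ hε hN)
    (prod_natCeil_le_coveringNumber_hyperrectangle (fun n => (hμ n).le) hε N)

end Hyperrectangle

theorem stmt9 (μ : ℕ → ℝ) (hpos : ∀ n, 0 < μ n) (hlim : Tendsto μ atTop (nhds 0))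
    (ε : ℝ) (hε : 0 < ε) :
    ((coveringNumber ε
          {x : lp (fun _ : ℕ => ℝ) ⊤ | ∀ n : ℕ, |(x : ℕ → ℝ) n| ≤ μ n}) : ℝ≥0∞)
        = ∏' n : ℕ, ((⌈μ n / ε⌉₊ : ℕ) : ℝ≥0∞) ∧
      metricEntropy ε {x : lp (fun _ : ℕ => ℝ) ⊤ | ∀ n : ℕ, |(x : ℕ → ℝ) n| ≤ μ n}
        = ∑' n : ℕ, Real.logb 2 (⌈μ n / ε⌉₊ : ℝ) := by
  obtain ⟨N, hN⟩ : ∃ N, ∀ n, N ≤ n → μ n ≤ ε :=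
    eventually_atTop.mp (hlim.eventually (ge_mem_nhds hε))
  have hcover := coveringNumber_hyperrectangle hpos hε hN
  have hceil_pos (n : ℕ) : 0 < ⌈μ n / ε⌉₊ := Nat.ceil_pos.mpr (div_pos (hpos n) hε)
  have htail (n : ℕ) (hn : n ∉ Finset.range N) : ⌈μ n / ε⌉₊ = 1 :=
    le_antisymm (Nat.ceil_le.mpr (by
      rw [Nat.cast_one, div_le_one hε]
      exact hN n (by simpa using hn))) (hceil_pos n)
  refine ⟨?_, ?_⟩
  · change ((coveringNumber ε (hyperrectangle μ)) : ℝ≥0∞) = _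
    rw [hcover, tprod_eq_prod (s := Finset.range N) fun n hn => by simp [htail n hn],
      ENat.toENNReal_coe, Nat.cast_prod]
  · change metricEntropy ε (hyperrectangle μ) = _
    rw [metricEntropy, hcover, ENat.toNat_natCast,
      tsum_eq_sum (s := Finset.range N) fun n hn => by simp [htail n hn], Nat.cast_prod,
      Real.logb_prod]
    exact fun n _ => Nat.cast_ne_zero.mpr (hceil_pos n).ne'
end

section
/- For b > 0 and c > 0, ∑_{k=1}^∞ log(1 + 1/k)·(⌈(c/(kε))^{1/b}⌉ − 1) ≥ (c^{1/b}/ε^{1/b}) ∑_{k=1}^∞ log(1 + 1/k)/k^{1/b} + O(log(ε^{-1})) as ε → 0. -/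
/-!
Write `ℓₖ = log₂(1 + 1/(k+1))` and `xₖ = (c/((k+1)ε))^{1/b}`, so that `ℓₖ xₖ` is the `k`-th term
of the right-hand series times `(c/ε)^{1/b}`. Since `⌈x⌉ - 1 ≥ x - 1`, the `k`-th term on the left
is at least `ℓₖ xₖ - ℓₖ`, and it vanishes once `k ≥ N = ⌈c/ε⌉`. Hence we lose only the
telescoping sum `∑_{k<N} ℓₖ = log₂(N+1) = log₂ ε⁻¹ + O(1)` and the tail `∑_{k≥N} ℓₖ xₖ`, which is
`O(1)` because `ℓₖ ≤ 1/((k+1) log 2)` and `p (t+1)^{-p-1} ≤ t^{-p} - (t+1)^{-p}` makes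
`∑_{k≥N} (k+1)^{-p-1}` telescope to at most `N^{-p}/p`.
-/

open Filter Finset Real

theorem rpow_neg_div_le_sub_rpow_neg {p t : ℝ} (hp : 0 ≤ p) (ht : 0 < t) :
    p * ((t + 1) ^ (-p) / (t + 1)) ≤ t ^ (-p) - (t + 1) ^ (-p) := by
  have ht1 : 0 < t + 1 := by linarith
  have hlog : 1 / (t + 1) ≤ log ((t + 1) / t) := by
    have h := one_sub_inv_le_log_of_pos (div_pos ht1 ht)
    rwa [inv_div, one_sub_div ht1.ne', add_sub_cancel_left] at h
  have hexp : 1 + p / (t + 1) ≤ ((t + 1) / t) ^ p := by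
    rw [rpow_def_of_pos (div_pos ht1 ht)]
    calc 1 + p / (t + 1) ≤ log ((t + 1) / t) * p + 1 := by
          rw [div_eq_mul_one_div p]; nlinarith
      _ ≤ exp (log ((t + 1) / t) * p) := add_one_le_exp _
  have hsplit : ((t + 1) / t) ^ p = (t + 1) ^ p * t ^ (-p) := by
    rw [div_rpow ht1.le ht.le, rpow_neg ht.le, div_eq_mul_inv]
  have hcancel : (t + 1) ^ (-p) * (t + 1) ^ p = 1 := by
    rw [rpow_neg ht1.le, inv_mul_cancel₀ (rpow_pos_of_pos ht1 p).ne']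
  have h := mul_le_mul_of_nonneg_left hexp (rpow_nonneg ht1.le (-p))
  rw [hsplit, ← mul_assoc, hcancel, one_mul] at h
  calc p * ((t + 1) ^ (-p) / (t + 1)) = (t + 1) ^ (-p) * (1 + p / (t + 1)) - (t + 1) ^ (-p) := by
        ring
    _ ≤ _ := by linarith

theorem sum_range_rpow_neg_div_le {p u : ℝ} (hp : 0 < p) (hu : 0 < u) (n : ℕ) :
    ∑ j ∈ range n, ((j : ℝ) + u + 1) ^ (-p) / ((j : ℝ) + u + 1) ≤ u ^ (-p) / p := by
  set g : ℕ → ℝ := fun m => ((m : ℝ) + u) ^ (-p)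
  have hstep : ∀ j : ℕ, ((j : ℝ) + u + 1) ^ (-p) / ((j : ℝ) + u + 1) ≤ (g j - g (j + 1)) / p := by
    intro j
    rw [le_div_iff₀ hp, mul_comm]
    have h := rpow_neg_div_le_sub_rpow_neg hp.le (by positivity : 0 < (j : ℝ) + u)
    simpa [g, add_right_comm] using h
  calc _ ≤ ∑ j ∈ range n, (g j - g (j + 1)) / p := sum_le_sum fun j _ => hstep j
    _ = (g 0 - g n) / p := by rw [← sum_div, sum_range_sub']
    _ ≤ u ^ (-p) / p := by
        gcongr
        simp only [g, Nat.cast_zero, zero_add, sub_le_self_iff]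
        positivity

theorem logb_one_add_one_div_le {t : ℝ} (ht : 0 < t) : logb 2 (1 + 1 / t) ≤ 1 / (t * log 2) := by
  have hlog : log (1 + 1 / t) * t ≤ 1 := by
    rw [← le_div_iff₀ ht]
    linarith [log_le_sub_one_of_pos (x := 1 + 1 / t) (by positivity)]
  rw [logb, div_le_div_iff₀ (log_pos one_lt_two) (by positivity), one_mul, ← mul_assoc]
  exact mul_le_of_le_one_left (log_pos one_lt_two).le hlog

theorem sum_range_logb_one_add_one_div (B : ℝ) (N : ℕ) :
    ∑ k ∈ range N, logb B (1 + 1 / ((k : ℝ) + 1)) = logb B ((N : ℝ) + 1) := by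
  induction N with
  | zero => simp
  | succ N ih =>
    have hN : (0 : ℝ) < N + 1 := by positivity
    rw [sum_range_succ, ih, ← logb_mul hN.ne' (by positivity), mul_add, mul_one_div_cancel hN.ne']
    push_cast
    ring_nf

theorem tsum_mul_natCeil_sub_one_ge {ℓ x : ℕ → ℝ} {N : ℕ} {B : ℝ} (hℓ : ∀ k, 0 ≤ ℓ k)
    (hx : ∀ k, N ≤ k → x k ∈ Set.Ioc 0 1)
    (hB : ∀ n, ∑ j ∈ range n, ℓ (j + N) * x (j + N) ≤ B) :
    ∑' k, ℓ k * x k - ∑ k ∈ range N, ℓ k - B ≤ ∑' k, ℓ k * ((⌈x k⌉₊ : ℝ) - 1) := by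
  have htail_nonneg : ∀ j, 0 ≤ ℓ (j + N) * x (j + N) :=
    fun j => mul_nonneg (hℓ _) (hx _ (Nat.le_add_left N j)).1.le
  have hsum : Summable fun k => ℓ k * x k :=
    (summable_nat_add_iff N).1 (summable_of_sum_range_le htail_nonneg hB)
  have htail := Real.tsum_le_of_sum_range_le htail_nonneg hB
  have hfinite : ∀ k ∉ range N, ℓ k * ((⌈x k⌉₊ : ℝ) - 1) = 0 := by
    intro k hk
    obtain ⟨hx0, hx1⟩ := hx k (by simpa using hk)
    have : ⌈x k⌉₊ = 1 := le_antisymm (Nat.ceil_le.2 (by simpa using hx1)) (Nat.ceil_pos.2 hx0)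
    simp [this]
  have hterm : ∀ k, ℓ k * x k - ℓ k ≤ ℓ k * ((⌈x k⌉₊ : ℝ) - 1) := fun k => by
    rw [← mul_sub_one]
    exact mul_le_mul_of_nonneg_left (by linarith [Nat.le_ceil (x k)]) (hℓ k)
  rw [← hsum.sum_add_tsum_nat_add N, tsum_eq_sum hfinite]
  have := sum_le_sum fun k (_ : k ∈ range N) => hterm k
  rw [sum_sub_distrib] at this
  linarith

theorem sum_range_logb_mul_rpow_le {a p : ℝ} {N : ℕ} (ha : 0 ≤ a) (hp : 0 < p)
    (hN : a ≤ N) (hN0 : 0 < N) (n : ℕ) :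
    ∑ j ∈ range n, logb 2 (1 + 1 / (((j + N : ℕ) : ℝ) + 1)) * (a / (((j + N : ℕ) : ℝ) + 1)) ^ p
      ≤ 1 / (p * log 2) := by
  have hN0' : (0 : ℝ) < N := by exact_mod_cast hN0
  have hterm : ∀ t : ℝ, 0 < t →
      logb 2 (1 + 1 / t) * (a / t) ^ p ≤ a ^ p / log 2 * (t ^ (-p) / t) := by
    intro t ht
    calc logb 2 (1 + 1 / t) * (a / t) ^ p ≤ 1 / (t * log 2) * (a ^ p * t ^ (-p)) := by
          rw [div_rpow ha ht.le, rpow_neg ht.le, ← div_eq_mul_inv]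
          gcongr
          exact logb_one_add_one_div_le ht
      _ = a ^ p / log 2 * (t ^ (-p) / t) := by ring
  calc _ ≤ ∑ j ∈ range n, a ^ p / log 2 * (((j : ℝ) + N + 1) ^ (-p) / ((j : ℝ) + N + 1)) :=
        sum_le_sum fun j _ => by
          simpa using hterm _ (by positivity : (0 : ℝ) < ((j + N : ℕ) : ℝ) + 1)
    _ ≤ a ^ p / log 2 * (N ^ (-p) / p) := by
        rw [← mul_sum]
        gcongr
        exact sum_range_rpow_neg_div_le hp hN0' n
    _ ≤ N ^ p / log 2 * (N ^ (-p) / p) := by gcongr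
    _ = 1 / (p * log 2) := by
        rw [rpow_neg hN0'.le]
        field_simp

theorem tsum_logb_mul_natCeil_sub_one_ge {b c ε : ℝ} (hb : 0 < b) (hc : 0 < c) (hε : 0 < ε)
    (hε1 : ε ≤ 1) :
    c ^ (1 / b) / ε ^ (1 / b) * ∑' k : ℕ, logb 2 (1 + 1 / ((k : ℝ) + 1)) / ((k : ℝ) + 1) ^ (1 / b)
        - (logb 2 ε⁻¹ + logb 2 (c + 2) + b / log 2)
      ≤ ∑' k : ℕ, logb 2 (1 + 1 / ((k : ℝ) + 1)) *
          ((⌈(c / (((k : ℝ) + 1) * ε)) ^ (1 / b)⌉₊ : ℝ) - 1) := by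
  set p := 1 / b with hp_def
  have hp : 0 < p := by positivity
  set a := c / ε
  have ha : 0 < a := by positivity
  set N := ⌈a⌉₊
  have haN : a ≤ N := Nat.le_ceil a
  have hN0 : 0 < N := Nat.ceil_pos.2 ha
  have hx : ∀ k : ℕ, c / (((k : ℝ) + 1) * ε) = a / ((k : ℝ) + 1) := fun k => by
    rw [mul_comm, ← div_div]
  have hx_mem : ∀ k, N ≤ k → (a / ((k : ℝ) + 1)) ^ p ∈ Set.Ioc 0 1 := by
    intro k hk
    have hak : a ≤ (k : ℝ) + 1 := by
      linarith [(Nat.cast_le (α := ℝ)).2 hk]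
    exact ⟨by positivity, rpow_le_one (by positivity) ((div_le_one (by positivity)).2 hak) hp.le⟩
  have hℓ : ∀ k : ℕ, 0 ≤ logb 2 (1 + 1 / ((k : ℝ) + 1)) := fun k =>
    logb_nonneg one_lt_two (le_add_of_nonneg_right (by positivity))
  have hmain := tsum_mul_natCeil_sub_one_ge hℓ hx_mem (sum_range_logb_mul_rpow_le ha.le hp haN hN0)
  have hseries : ∑' k : ℕ, logb 2 (1 + 1 / ((k : ℝ) + 1)) * (a / ((k : ℝ) + 1)) ^ p
      = c ^ p / ε ^ p * ∑' k : ℕ, logb 2 (1 + 1 / ((k : ℝ) + 1)) / ((k : ℝ) + 1) ^ p := by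
    rw [← div_rpow hc.le hε.le, ← tsum_mul_left]
    congr 1 with k
    rw [div_rpow ha.le (by positivity)]
    ring
  have hhead : logb 2 ((N : ℝ) + 1) ≤ logb 2 ε⁻¹ + logb 2 (c + 2) := by
    rw [← logb_mul (by positivity) (by positivity)]
    refine logb_le_logb_of_le one_lt_two (by positivity) ?_
    have hN : (N : ℝ) < a + 1 := Nat.ceil_lt_add_one ha.le
    have : 1 ≤ ε⁻¹ := one_le_inv_iff₀.2 ⟨hε, hε1⟩
    rw [show a = c * ε⁻¹ from div_eq_mul_inv c ε] at hN
    nlinarith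
  have hB : 1 / (p * log 2) = b / log 2 := by
    rw [hp_def]; field_simp
  simp only [hx]
  rw [sum_range_logb_one_add_one_div, hseries, hB] at hmain
  linarith

theorem stmt13 (b c : ℝ) (hb : 0 < b) (hc : 0 < c) :
    ∃ C : ℝ, ∀ᶠ ε in nhdsWithin (0 : ℝ) (Set.Ioi 0),
      (∑' k : ℕ, Real.logb 2 (1 + 1 / ((k : ℝ) + 1)) *
          ((⌈(c / (((k : ℝ) + 1) * ε)) ^ ((1 : ℝ) / b)⌉₊ : ℝ) - 1))
        ≥ c ^ ((1 : ℝ) / b) / ε ^ ((1 : ℝ) / b) *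
            (∑' k : ℕ, Real.logb 2 (1 + 1 / ((k : ℝ) + 1)) / ((k : ℝ) + 1) ^ ((1 : ℝ) / b))
          - C * Real.logb 2 ε⁻¹ := by
  refine ⟨2, ?_⟩
  have hlarge : ∀ᶠ ε in nhdsWithin (0 : ℝ) (Set.Ioi 0), logb 2 (c + 2) + b / log 2 ≤ logb 2 ε⁻¹ :=
    (tendsto_logb_atTop one_lt_two).comp tendsto_inv_nhdsGT_zero |>.eventually_ge_atTop _
  filter_upwards [hlarge, self_mem_nhdsWithin, Ioo_mem_nhdsGT one_pos] with ε hε hε0 hε1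
  linarith [tsum_logb_mul_natCeil_sub_one_ge hb hc hε0 hε1.2.le]
end

section
/- Let b > 0, p,q ∈ [1,∞] with q = p/(pb+1) (interpreted as q = 1/b if p = ∞), and let (μ_n) be non-increasing, regularly varying with index −b, and satisfy lim_{n→∞} n μ_n^{1/b} > 0. Then the p-ellipsoid E_p = {x ∈ ℓ^p : ∑ |x_n/μ_n|^p ≤ 1} is not totally bounded in ℓ^q: there exists ε* > 0 such that no finite ε-covering of E_p in the ℓ^q-norm exists for any ε ∈ (0, ε*). -/
/-!
Cut `ℕ` into the dyadic blocks `B_k = [m 2^k, m 2^(k+1))` and put on `B_k` the constant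
`δ_k = μ(m 2^(k+1)) (m 2^k)^(-1/p)`. Since `μ` is non-increasing, `μ_n ≥ μ(m 2^(k+1))` on `B_k`,
so each bump lies in `E_p`. Two distinct bumps are `≥ δ_k` apart on all of `B_k`, so their
`ℓ^q` distance is at least `(m 2^k)^(1/q) δ_k = μ(m 2^(k+1)) (m 2^k)^b`, using `1/q = b + 1/p`.
The hypothesis `liminf n μ_n^(1/b) > 0` bounds this below by a constant `s > 0` uniformly in `k`.
So `E_p` contains infinitely many points at mutual `ℓ^q` distance `≥ s`, and by pigeonhole no
finite family of `ε`-balls with `2ε < s` covers it.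
-/

open Filter ENNReal

/-- `ℓ^r` "norm" of a real sequence, valued in `ℝ≥0∞` (sup norm when `r = ∞`). -/
noncomputable def seqNorm (r : ℝ≥0∞) (x : ℕ → ℝ) : ℝ≥0∞ :=
  if r = ∞ then ⨆ n, (‖x n‖₊ : ℝ≥0∞)
  else (∑' n, (‖x n‖₊ : ℝ≥0∞) ^ r.toReal) ^ (1 / r.toReal)

open MeasureTheory Finset

theorem seqNorm_eq_eLpNorm {r : ℝ≥0∞} (hr : r ≠ 0) (x : ℕ → ℝ) :
    seqNorm r x = eLpNorm x r Measure.count := by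
  rcases eq_or_ne r ∞ with rfl | hr_top
  · simp [seqNorm, eLpNorm_exponent_top, enorm_eq_nnnorm]
  · simp [seqNorm, hr_top, eLpNorm_eq_eLpNorm' hr hr_top, eLpNorm', lintegral_count,
      enorm_eq_nnnorm]

theorem seqNorm_sub_le {r : ℝ≥0∞} (hr : 1 ≤ r) (x y : ℕ → ℝ) :
    seqNorm r (x - y) ≤ seqNorm r x + seqNorm r y := by
  simp only [seqNorm_eq_eLpNorm (zero_lt_one.trans_le hr).ne']
  exact eLpNorm_sub_le .of_discrete .of_discrete hr

theorem enorm_mul_natCast_rpow {C t : ℝ} (hC : 0 ≤ C) (ht : 0 ≤ t) (N : ℕ) :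
    ‖C‖ₑ * (N : ℝ≥0∞) ^ t = ENNReal.ofReal (C * (N : ℝ) ^ t) := by
  rw [Real.enorm_of_nonneg hC, ENNReal.ofReal_mul hC, ← ENNReal.ofReal_natCast,
    ENNReal.ofReal_rpow_of_nonneg (Nat.cast_nonneg N) ht]

-- For `r = ∞` the exponent `1 / r.toReal` is `0`, and the bound is just `C`.
theorem seqNorm_le_ofReal_of_abs_le {r : ℝ≥0∞} (hr : r ≠ 0) {x : ℕ → ℝ} (B : Finset ℕ) {C : ℝ}
    (hC : 0 ≤ C) (hxB : ∀ n ∈ B, |x n| ≤ C) (hx : ∀ n ∉ B, x n = 0) :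
    seqNorm r x ≤ ENNReal.ofReal (C * (#B : ℝ) ^ (1 / r.toReal)) := by
  rw [seqNorm_eq_eLpNorm hr]
  calc eLpNorm x r Measure.count
      ≤ eLpNorm ((B : Set ℕ).indicator fun _ => C) r Measure.count := by
        refine eLpNorm_mono fun n => ?_
        by_cases hn : n ∈ B
        · simpa [hn, abs_of_nonneg hC] using hxB n hn
        · simp [hn, hx n hn]
    _ ≤ ‖C‖ₑ * Measure.count (B : Set ℕ) ^ (1 / r.toReal) := eLpNorm_indicator_const_le C r
    _ = _ := by rw [Measure.count_apply_finset, enorm_mul_natCast_rpow hC (by positivity)]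

theorem ofReal_le_seqNorm_of_le_abs {q : ℝ} (hq : 0 < q) {x : ℕ → ℝ} (B : Finset ℕ) {C : ℝ}
    (hC : 0 ≤ C) (hxB : ∀ n ∈ B, C ≤ |x n|) :
    ENNReal.ofReal (C * (#B : ℝ) ^ (1 / q)) ≤ seqNorm (ENNReal.ofReal q) x := by
  have hq' : ENNReal.ofReal q ≠ 0 := by simpa using hq
  rw [seqNorm_eq_eLpNorm hq']
  calc ENNReal.ofReal (C * (#B : ℝ) ^ (1 / q))
      = eLpNorm ((B : Set ℕ).indicator fun _ => C) (ENNReal.ofReal q) Measure.count := by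
        rw [eLpNorm_indicator_const (.of_discrete) hq' ofReal_ne_top, Measure.count_apply_finset,
          toReal_ofReal hq.le, enorm_mul_natCast_rpow hC (by positivity)]
    _ ≤ eLpNorm x (ENNReal.ofReal q) Measure.count := by
        refine eLpNorm_mono fun n => ?_
        by_cases hn : n ∈ B
        · simpa [hn, abs_of_nonneg hC] using hxB n hn
        · simp [hn]

theorem not_exists_finset_cover_of_separated {ι : Type*} [Infinite ι] {r : ℝ≥0∞} (hr : 1 ≤ r)
    {E : Set (ℕ → ℝ)} {ε : ℝ≥0∞} (x : ι → ℕ → ℝ) (hxE : ∀ k, x k ∈ E)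
    (hsep : ∀ j k, j ≠ k → 2 * ε < seqNorm r (x j - x k)) :
    ¬ ∃ S : Finset (ℕ → ℝ), E ⊆ ⋃ c ∈ S, {y | seqNorm r (fun n => y n - c n) ≤ ε} := by
  rintro ⟨S, hS⟩
  choose c hcS hc using fun k => Set.mem_iUnion₂.mp (hS (hxE k))
  obtain ⟨j, k, hjk, hcjk⟩ := Finite.exists_ne_map_eq_of_infinite fun k => (⟨c k, hcS k⟩ : S)
  have hc' : c j = c k := congrArg Subtype.val hcjk
  refine (hsep j k hjk).not_ge ?_
  calc seqNorm r (x j - x k) = seqNorm r ((x j - c j) - (x k - c k)) := by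
        rw [hc', sub_sub_sub_cancel_right]
    _ ≤ ε + ε := (seqNorm_sub_le hr _ _).trans (add_le_add (hc j) (hc k))
    _ = 2 * ε := (two_mul ε).symm

def dyadicBlock (m k : ℕ) : Finset ℕ := Ico (m * 2 ^ k) (m * 2 ^ (k + 1))

theorem card_dyadicBlock (m k : ℕ) : #(dyadicBlock m k) = m * 2 ^ k := by
  rw [dyadicBlock, Nat.card_Ico, pow_succ, ← mul_assoc, mul_two, Nat.add_sub_cancel]

theorem disjoint_dyadicBlock {m j k : ℕ} (hjk : j ≠ k) :
    Disjoint (dyadicBlock m j) (dyadicBlock m k) := by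
  wlog hlt : j < k generalizing j k
  · exact (this hjk.symm (hjk.lt_or_gt.resolve_left hlt)).symm
  refine Finset.disjoint_left.mpr fun n hj hk => ?_
  simp only [dyadicBlock, mem_Ico] at hj hk
  have : m * 2 ^ (j + 1) ≤ m * 2 ^ k := Nat.mul_le_mul_left m (Nat.pow_le_pow_right two_pos hlt)
  omega

theorem rpow_le_mul_rpow_of_le_mul_rpow_inv {b c x y : ℝ} (hb : 0 < b) (hc : 0 ≤ c) (hx : 0 ≤ x)
    (hy : 0 ≤ y) (h : c ≤ x * y ^ (1 / b)) : c ^ b ≤ y * x ^ b := by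
  calc c ^ b ≤ (x * y ^ (1 / b)) ^ b := Real.rpow_le_rpow hc h hb.le
    _ = y * x ^ b := by
      rw [Real.mul_rpow hx (by positivity), ← Real.rpow_mul hy, one_div_mul_cancel hb.ne',
        Real.rpow_one, mul_comm]

noncomputable def dyadicBump (μ : ℕ → ℝ) (p : ℝ≥0∞) (m k : ℕ) : ℕ → ℝ :=
  (dyadicBlock m k : Set ℕ).indicator fun _ =>
    μ (m * 2 ^ (k + 1)) * ((m * 2 ^ k : ℕ) : ℝ) ^ (-(1 / p.toReal))

theorem seqNorm_div_dyadicBump_le_one {μ : ℕ → ℝ} (hpos : ∀ n, 0 < μ n) (hμ : Antitone μ)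
    {p : ℝ≥0∞} (hp : p ≠ 0) (m k : ℕ) :
    seqNorm p (fun n => dyadicBump μ p m k n / μ n) ≤ 1 := by
  set K : ℝ := ((m * 2 ^ k : ℕ) : ℝ)
  calc _ ≤ ENNReal.ofReal (K ^ (-(1 / p.toReal)) * (#(dyadicBlock m k) : ℝ) ^ (1 / p.toReal)) := by
        refine seqNorm_le_ofReal_of_abs_le hp (dyadicBlock m k) (by positivity) (fun n hn => ?_)
          fun n hn => by simp [dyadicBump, hn]
        have hμn : μ (m * 2 ^ (k + 1)) ≤ μ n := hμ (mem_Ico.mp hn).2.le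
        rw [dyadicBump, Set.indicator_of_mem (by exact_mod_cast hn), abs_div, abs_mul,
          abs_of_pos (hpos _), abs_of_pos (hpos n), abs_of_nonneg (by positivity),
          mul_div_right_comm]
        exact mul_le_of_le_one_left (by positivity) ((div_le_one (hpos n)).mpr hμn)
    _ ≤ 1 := by
        rw [card_dyadicBlock, Real.rpow_neg (by positivity), ofReal_le_one]
        exact inv_mul_le_one

theorem ofReal_le_seqNorm_dyadicBump_sub {μ : ℕ → ℝ} (hpos : ∀ n, 0 < μ n) {p : ℝ≥0∞}
    {b q : ℝ} (hq : 0 < q) (hexp : 1 / q = b + 1 / p.toReal) {m j k : ℕ} (hm : 0 < m)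
    (hjk : j ≠ k) :
    ENNReal.ofReal (μ (m * 2 ^ (k + 1)) * ((m * 2 ^ k : ℕ) : ℝ) ^ b)
      ≤ seqNorm (ENNReal.ofReal q) (dyadicBump μ p m k - dyadicBump μ p m j) := by
  set K : ℝ := ((m * 2 ^ k : ℕ) : ℝ)
  have hK : 0 < K := by positivity
  set δ := μ (m * 2 ^ (k + 1)) * K ^ (-(1 / p.toReal))
  have hδ : 0 ≤ δ := mul_nonneg (hpos _).le (Real.rpow_nonneg hK.le _)
  calc ENNReal.ofReal (μ (m * 2 ^ (k + 1)) * K ^ b)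
      = ENNReal.ofReal (δ * (#(dyadicBlock m k) : ℝ) ^ (1 / q)) := by
        rw [card_dyadicBlock, mul_assoc, ← Real.rpow_add hK, hexp]
        ring_nf
    _ ≤ _ := by
        refine ofReal_le_seqNorm_of_le_abs hq _ hδ fun n hn => ?_
        have hnj : n ∉ dyadicBlock m j := Finset.disjoint_right.mp (disjoint_dyadicBlock hjk) hn
        rw [Pi.sub_apply, dyadicBump, dyadicBump, Set.indicator_of_mem (by exact_mod_cast hn),
          Set.indicator_of_notMem (by exact_mod_cast hnj), sub_zero, abs_of_nonneg hδ]

theorem one_div_eq_add_one_div_toReal {b q : ℝ} {p : ℝ≥0∞} (hp : p ≠ 0)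
    (hq : q = if p = ∞ then 1 / b else p.toReal / (p.toReal * b + 1)) :
    1 / q = b + 1 / p.toReal := by
  rcases eq_or_ne p ∞ with rfl | hp_top
  · simp [hq]
  · have : 0 < p.toReal := ENNReal.toReal_pos hp hp_top
    rw [hq, if_neg hp_top]
    field_simp

theorem stmt18_general (b : ℝ) (hb : 0 < b) (p : ℝ≥0∞) (q : ℝ)
    (hq : q = if p = ∞ then 1 / b else p.toReal / (p.toReal * b + 1)) (hq1 : 1 ≤ q)
    (μ : ℕ → ℝ) (hpos : ∀ n, 0 < μ n) (hmono : ∀ m n : ℕ, m ≤ n → μ n ≤ μ m)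
    (hlim : 0 < Filter.liminf (fun n : ℕ => (n : ℝ) * μ n ^ (1 / b)) atTop) :
    ∃ εstar : ℝ, 0 < εstar ∧ ∀ ε : ℝ, 0 < ε → ε < εstar →
      ¬ ∃ S : Finset (ℕ → ℝ),
          {x : ℕ → ℝ | seqNorm p (fun n => x n / μ n) ≤ 1} ⊆
            ⋃ c ∈ S, {y : ℕ → ℝ | seqNorm (ENNReal.ofReal q) (fun n => y n - c n)
              ≤ ENNReal.ofReal ε} := by
  have hq0 : 0 < q := by linarith
  have hp0 : p ≠ 0 := by
    rintro rfl
    exact hq0.ne' (by simpa using hq)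
  have hexp := one_div_eq_add_one_div_toReal hp0 hq
  set L := liminf (fun n : ℕ => (n : ℝ) * μ n ^ (1 / b)) atTop
  obtain ⟨N, hN⟩ : ∃ N, ∀ n ≥ N, L / 2 < n * μ n ^ (1 / b) :=
    eventually_atTop.mp <| eventually_lt_of_lt_liminf (half_lt_self hlim)
      (isBoundedUnder_of ⟨0, fun n => by have := hpos n; positivity⟩)
  refine ⟨(L / 4) ^ b / 2, by positivity, fun ε hε hεs => ?_⟩
  refine not_exists_finset_cover_of_separated (ENNReal.one_le_ofReal.mpr hq1)
    (dyadicBump μ p (N + 1)) (fun k => seqNorm_div_dyadicBump_le_one hpos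
      (fun _ _ => hmono _ _) hp0 _ _) fun k j hjk => ?_
  have hμ : (L / 4) ^ b ≤ μ ((N + 1) * 2 ^ (k + 1)) * (((N + 1) * 2 ^ k : ℕ) : ℝ) ^ b := by
    refine rpow_le_mul_rpow_of_le_mul_rpow_inv hb (by positivity) (by positivity) (hpos _).le ?_
    have hNk := hN ((N + 1) * 2 ^ (k + 1)) (by nlinarith [Nat.one_le_two_pow (n := k + 1)])
    push_cast at hNk ⊢
    rw [pow_succ] at hNk
    linarith
  calc 2 * ENNReal.ofReal ε = ENNReal.ofReal (2 * ε) := by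
        rw [ENNReal.ofReal_mul zero_le_two, ofReal_ofNat]
    _ < ENNReal.ofReal ((L / 4) ^ b) :=
        (ENNReal.ofReal_lt_ofReal_iff (by positivity)).mpr (by linarith)
    _ ≤ _ := (ENNReal.ofReal_le_ofReal hμ).trans
      (ofReal_le_seqNorm_dyadicBump_sub hpos hq0 hexp N.succ_pos hjk.symm)

theorem stmt18 (b : ℝ) (hb : 0 < b) (p : ℝ≥0∞) (hp : 1 ≤ p) (q : ℝ)
    (hq : q = if p = ∞ then 1 / b else p.toReal / (p.toReal * b + 1)) (hq1 : 1 ≤ q)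
    (μ : ℕ → ℝ) (hpos : ∀ n, 0 < μ n) (hmono : ∀ m n : ℕ, m ≤ n → μ n ≤ μ m)
    (hrv : ∀ α : ℝ, 0 < α →
      Tendsto (fun n : ℕ => μ ⌊α * n⌋₊ / μ n) atTop (nhds (α ^ (-b))))
    (hlim : 0 < Filter.liminf (fun n : ℕ => (n : ℝ) * μ n ^ (1 / b)) atTop) :
    ∃ εstar : ℝ, 0 < εstar ∧ ∀ ε : ℝ, 0 < ε → ε < εstar →
      ¬ ∃ S : Finset (ℕ → ℝ),
          {x : ℕ → ℝ | seqNorm p (fun n => x n / μ n) ≤ 1} ⊆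
            ⋃ c ∈ S, {y : ℕ → ℝ | seqNorm (ENNReal.ofReal q) (fun n => y n - c n)
              ≤ ENNReal.ofReal ε} :=
  stmt18_general b hb p q hq hq1 μ hpos hmono hlim
end
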